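/- arXiv:2111.15575 — 9 statements merged into one kernel-verified Lean document; each statement's English description precedes it below -/
import Mathlib

section
/- Let (M_k)_{k≥1} be a strictly increasing sequence of positive integers with M_{k+1}/M_k → 1 as k → ∞, and define μ_n = 1/M_k for M_{k-1} < n ≤ M_k (M_0 = 0). Then (1/Log N) · Σ_{n=1}^{N} μ_n → 1 as N → ∞. -/
open Filter Finset

theorem stmt_3 (M : ℕ → ℕ) (hM0 : M 0 = 0) (hmono : StrictMono M)
    (hratio : Tendsto (fun k => (M (k + 1) : ℝ) / (M k : ℝ)) atTop (nhds 1))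
    (μ : ℕ → ℝ)
    (hμ : ∀ k n, 1 ≤ k → M (k - 1) < n → n ≤ M k → μ n = 1 / (M k : ℝ)) :
    Tendsto (fun N : ℕ => (1 / Real.log N) * ∑ n ∈ Finset.Icc 1 N, μ n)
      atTop (nhds 1) := by
  -- basic facts about M
  have hMle : ∀ k, k ≤ M k := fun k => hmono.le_apply
  have hMpos : ∀ k, 1 ≤ k → 1 ≤ M k := fun k hk => le_trans hk (hMle k)
  have hMcast : ∀ k, 1 ≤ k → (0:ℝ) < (M k : ℝ) := fun k hk => by
    exact_mod_cast Nat.lt_of_lt_of_le Nat.zero_lt_one (hMpos k hk)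
  -- the partial sum function
  set T : ℕ → ℝ := fun N => ∑ n ∈ Finset.Icc 1 N, μ n with hT
  -- K N = index of the block containing N
  have hKex : ∀ N : ℕ, ∃ k, N ≤ M k := fun N => ⟨N, hMle N⟩
  set K : ℕ → ℕ := fun N => sInf {k | N ≤ M k} with hK
  have hKmem : ∀ N, N ≤ M (K N) := fun N => Nat.sInf_mem (hKex N)
  have hKpos : ∀ N, 1 ≤ N → 1 ≤ K N := by
    intro N hN
    by_contra h
    have h0 : K N = 0 := by omega
    have h2 := hKmem N
    rw [h0, hM0] at h2; omega
  have hKlt : ∀ N, 1 ≤ N → M (K N - 1) < N := by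
    intro N hN
    have h1 : K N - 1 < K N := by have := hKpos N hN; omega
    have := Nat.notMem_of_lt_sInf h1
    simpa [hK] using Nat.lt_of_not_le this
  -- μ is nonneg on [1,∞)
  have hμval : ∀ n, 1 ≤ n → μ n = 1 / (M (K n) : ℝ) := fun n hn =>
    hμ (K n) n (hKpos n hn) (hKlt n hn) (hKmem n)
  have hμnonneg : ∀ n, 1 ≤ n → 0 ≤ μ n := by
    intro n hn
    rw [hμval n hn]
    positivity
  -- T is monotone and nonneg
  have hTnonneg : ∀ N, 0 ≤ T N := by
    intro N
    apply Finset.sum_nonneg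
    intro n hn
    exact hμnonneg n (Finset.mem_Icc.mp hn).1
  have hTmono : Monotone T := by
    intro a b hab
    apply Finset.sum_le_sum_of_subset_of_nonneg
    · exact Finset.Icc_subset_Icc_right hab
    · intro n hn _
      exact hμnonneg n (Finset.mem_Icc.mp hn).1
  -- block sums
  have hIoc : ∀ N : ℕ, T N = ∑ n ∈ Finset.Ioc 0 N, μ n := by
    intro N
    rw [hT]
    exact Finset.sum_congr (Finset.Icc_add_one_left_eq_Ioc 0 N) (fun _ _ => rfl)
  have hseg : ∀ k : ℕ, T (M (k+1)) = T (M k) + ((M (k+1) : ℝ) - (M k : ℝ)) / (M (k+1) : ℝ) := by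
    intro k
    rw [hIoc (M (k+1)), hIoc (M k),
      ← Finset.sum_Ioc_consecutive _ (Nat.zero_le (M k)) (hmono (Nat.lt_succ_self k)).le]
    congr 1
    have hconst : ∀ n ∈ Finset.Ioc (M k) (M (k+1)), μ n = 1 / (M (k+1) : ℝ) := by
      intro n hn
      rw [Finset.mem_Ioc] at hn
      exact hμ (k+1) n (by omega) (by simpa using hn.1) hn.2
    rw [Finset.sum_congr rfl hconst, Finset.sum_const, Nat.card_Ioc, nsmul_eq_mul]
    have hcast : ((M (k+1) - M k : ℕ) : ℝ) = (M (k+1):ℝ) - (M k : ℝ) :=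
      Nat.cast_sub (hmono (Nat.lt_succ_self k)).le
    rw [hcast]
    ring
  -- the increments a and b
  set a : ℕ → ℝ := fun k => T (M (k+1)) - T (M k) with ha
  set b : ℕ → ℝ := fun k => Real.log (M (k+1)) - Real.log (M k) with hb
  have hb0 : ∀ k, 0 ≤ b k := by
    intro k
    rcases Nat.eq_zero_or_pos k with hk | hk
    · subst hk
      simp [hb, hM0, Real.log_natCast_nonneg]
    · exact sub_nonneg.mpr (Real.log_le_log (hMcast k hk) (by exact_mod_cast (hmono (Nat.lt_succ_self k)).le))
  have hbpos : ∀ k, 1 ≤ k → 0 < b k := by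
    intro k hk
    exact sub_pos.mpr (Real.log_lt_log (hMcast k hk) (by exact_mod_cast hmono (Nat.lt_succ_self k)))
  have hlogtop : Tendsto (fun n => Real.log (M n)) atTop atTop := by
    apply Real.tendsto_log_atTop.comp
    apply tendsto_atTop_mono (fun n => by exact_mod_cast hMle n) tendsto_natCast_atTop_atTop
  have hbsum : ∀ n, ∑ i ∈ range n, b i = Real.log (M n) := by
    intro n
    rw [hb]
    rw [Finset.sum_range_sub (fun k => Real.log (M k))]
    simp [hM0]
  have hbtop : Tendsto (fun n => ∑ i ∈ range n, b i) atTop atTop := by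
    simp only [hbsum]; exact hlogtop
  -- ratio of increments tends to 1
  have hφ : Tendsto (fun r : ℝ => (1 - r⁻¹) / Real.log r) (nhdsWithin 1 (Set.Ioi 1)) (nhds 1) := by
    have h1 : Tendsto (fun r : ℝ => Real.log r / (r - 1)) (nhdsWithin 1 {(1:ℝ)}ᶜ) (nhds 1) := by
      have := hasDerivAt_iff_tendsto_slope.mp (Real.hasDerivAt_log one_ne_zero)
      simp only [inv_one] at this
      refine this.congr (fun r => ?_)
      simp [slope_def_field, Real.log_one]
    have h1' : Tendsto (fun r : ℝ => Real.log r / (r - 1)) (nhdsWithin 1 (Set.Ioi 1)) (nhds 1) :=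
      h1.mono_left (nhdsWithin_mono _ (fun x hx => ne_of_gt hx))
    have h2 : Tendsto (fun r : ℝ => r⁻¹) (nhdsWithin 1 (Set.Ioi 1)) (nhds 1) := by
      have : Tendsto (fun r : ℝ => r⁻¹) (nhds 1) (nhds 1) := by
        simpa using (continuousAt_inv₀ (one_ne_zero : (1:ℝ) ≠ 0)).tendsto
      exact this.mono_left nhdsWithin_le_nhds
    have h3 := h2.div h1' one_ne_zero
    rw [div_one] at h3
    refine h3.congr' ?_
    filter_upwards [self_mem_nhdsWithin] with r (hr : 1 < r)
    have hr0 : r ≠ 0 := by linarith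
    have hl : Real.log r ≠ 0 := (Real.log_pos hr).ne'
    have hr1 : r - 1 ≠ 0 := by linarith
    simp only [Pi.div_apply]
    field_simp
  set r : ℕ → ℝ := fun k => (M (k+1) : ℝ) / (M k : ℝ) with hr
  have hrmem : ∀ᶠ k in atTop, r k ∈ Set.Ioi (1:ℝ) := by
    filter_upwards [eventually_ge_atTop 1] with k hk
    exact (one_lt_div (hMcast k hk)).mpr (by exact_mod_cast hmono (Nat.lt_succ_self k))
  have hrt : Tendsto r atTop (nhdsWithin 1 (Set.Ioi 1)) :=
    tendsto_nhdsWithin_iff.mpr ⟨hratio, hrmem⟩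
  have hψ : Tendsto (fun k => a k / b k) atTop (nhds 1) := by
    refine (hφ.comp hrt).congr' ?_
    filter_upwards [eventually_ge_atTop 1] with k hk
    have hMk := (hMcast k hk).ne'
    have hMk1 := (hMcast (k+1) (by omega)).ne'
    have hba : b k = Real.log (r k) := by
      rw [hb, hr]
      rw [Real.log_div hMk1 hMk]
    have haa : a k = 1 - (r k)⁻¹ := by
      show T (M (k+1)) - T (M k) = 1 - (r k)⁻¹
      rw [hseg k]
      simp only [hr]
      field_simp
      ring
    rw [Function.comp_apply, hba, haa]
  -- Stolz--Cesàro via sum_range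
  have hlo : (fun k => a k - b k) =o[atTop] b := by
    rw [Asymptotics.isLittleO_iff_tendsto']
    · have : Tendsto (fun k => a k / b k - 1) atTop (nhds 0) := by
        have h := hψ.sub (tendsto_const_nhds (x := (1:ℝ)))
        rwa [sub_self] at h
      refine this.congr' ?_
      filter_upwards [eventually_ge_atTop 1] with k hk
      have hbne : b k ≠ 0 := (hbpos k hk).ne'
      field_simp
    · filter_upwards [eventually_ge_atTop 1] with k hk h
      exact absurd h (hbpos k hk).ne'
  have hsum := hlo.sum_range hb0 hbtop
  have hT0 : T (M 0) = 0 := by simp [hT, hM0]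
  have hsum' : (fun n => T (M n) - Real.log (M n)) =o[atTop] (fun n => Real.log (M n)) := by
    have e1 : ∀ n, ∑ i ∈ range n, (a i - b i) = T (M n) - Real.log (M n) := by
      intro n
      rw [Finset.sum_sub_distrib, ha, Finset.sum_range_sub (fun k => T (M k)), hbsum, hT0, sub_zero]
    refine Asymptotics.IsLittleO.congr' hsum (Eventually.of_forall e1) ?_
    filter_upwards using fun n => by rw [hbsum]
  have hG : Tendsto (fun n => T (M n) / Real.log (M n)) atTop (nhds 1) := by
    rw [Asymptotics.isLittleO_iff_tendsto'] at hsum'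
    · have := hsum'
      have h2 : Tendsto (fun n => (T (M n) - Real.log (M n)) / Real.log (M n) + 1) atTop (nhds 1) := by
        simpa using this.add (tendsto_const_nhds (x := (1:ℝ)))
      refine h2.congr' ?_
      filter_upwards [hlogtop.eventually_gt_atTop 0] with n hn
      field_simp
      ring
    · filter_upwards [hlogtop.eventually_gt_atTop 0] with n hn h
      exact absurd h hn.ne'
  -- log ratio tends to 1
  have hbz : Tendsto b atTop (nhds 0) := by
    have : Tendsto (fun k => Real.log (r k)) atTop (nhds 0) := by
      have := (Real.continuousAt_log one_ne_zero).tendsto.comp hratio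
      simpa [Real.log_one, Function.comp_def] using this
    refine this.congr' ?_
    filter_upwards [eventually_ge_atTop 1] with k hk
    rw [hr, Real.log_div (hMcast (k+1) (by omega)).ne' (hMcast k hk).ne', hb]
  have hQ : Tendsto (fun k => Real.log (M (k+1)) / Real.log (M k)) atTop (nhds 1) := by
    have h1 : Tendsto (fun k => 1 + b k * (Real.log (M k))⁻¹) atTop (nhds 1) := by
      have := hbz.mul (hlogtop.inv_tendsto_atTop)
      simpa using (tendsto_const_nhds (x := (1:ℝ))).add this
    refine h1.congr' ?_
    filter_upwards [hlogtop.eventually_gt_atTop 0] with k hk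
    rw [hb]
    field_simp
    ring
  -- K tends to infinity
  have hKtop : Tendsto K atTop atTop := by
    rw [tendsto_atTop_atTop]
    intro m
    refine ⟨M m + 1, fun N hN => ?_⟩
    by_contra h
    push_neg at h
    have : M (K N) ≤ M m := hmono.monotone (by omega)
    have := hKmem N
    omega
  -- limits of the bounding sequences
  have hlo_t : Tendsto (fun k => T (M (k-1)) / Real.log (M k)) atTop (nhds 1) := by
    have hG' : Tendsto (fun k => T (M (k-1)) / Real.log (M (k-1))) atTop (nhds 1) :=
      hG.comp (tendsto_sub_atTop_nat 1)
    have hQ' : Tendsto (fun k => Real.log (M (k-1+1)) / Real.log (M (k-1))) atTop (nhds 1) :=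
      hQ.comp (tendsto_sub_atTop_nat 1)
    have := hG'.div hQ' one_ne_zero
    rw [div_one] at this
    refine this.congr' ?_
    filter_upwards [eventually_ge_atTop 3] with k hk
    have h1 : k - 1 + 1 = k := by omega
    have hk1 : (2:ℕ) ≤ M (k-1) := le_trans (by omega : 2 ≤ k - 1) (hMle _)
    have hl1 : Real.log (M (k-1)) ≠ 0 := (Real.log_pos (by exact_mod_cast hk1)).ne'
    simp only [Pi.div_apply]
    have hk2 : (2:ℕ) ≤ M k := le_trans (by omega : 2 ≤ k) (hMle _)
    have hl2 : Real.log (M k) ≠ 0 := (Real.log_pos (by exact_mod_cast hk2)).ne'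
    rw [h1]
    field_simp
  have hhi_t : Tendsto (fun k => T (M k) / Real.log (M (k-1))) atTop (nhds 1) := by
    have hQ' : Tendsto (fun k => Real.log (M (k-1+1)) / Real.log (M (k-1))) atTop (nhds 1) :=
      hQ.comp (tendsto_sub_atTop_nat 1)
    have := hG.mul hQ'
    rw [mul_one] at this
    refine this.congr' ?_
    filter_upwards [eventually_ge_atTop 3] with k hk
    have h1 : k - 1 + 1 = k := by omega
    have hk2 : (2:ℕ) ≤ M k := le_trans (by omega : 2 ≤ k) (hMle _)
    have hl2 : Real.log (M k) ≠ 0 := (Real.log_pos (by exact_mod_cast hk2)).ne'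
    have hk1 : (2:ℕ) ≤ M (k-1) := le_trans (by omega : 2 ≤ k - 1) (hMle _)
    have hl1 : Real.log (M (k-1)) ≠ 0 := (Real.log_pos (by exact_mod_cast hk1)).ne'
    rw [h1]
    field_simp
  -- final squeeze
  refine tendsto_of_tendsto_of_tendsto_of_le_of_le'
    ((hlo_t.comp hKtop)) ((hhi_t.comp hKtop)) ?_ ?_
  · -- lower bound
    filter_upwards [eventually_ge_atTop (M 2 + 1), eventually_ge_atTop 2,
      (hKtop.eventually_ge_atTop 3)] with N hN hN2 hK3
    have hk := hKmem N
    have hklt := hKlt N (by omega)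
    have hMk1 : (2:ℕ) ≤ M (K N - 1) := le_trans (by omega : 2 ≤ K N - 1) (hMle _)
    have hlogN : (0:ℝ) < Real.log N := Real.log_pos (by exact_mod_cast hN2)
    have hlogMk : Real.log N ≤ Real.log (M (K N)) :=
      Real.log_le_log (by positivity) (by exact_mod_cast hk)
    have h1 : (1 / Real.log N) * T N = T N / Real.log N := by ring
    simp only [Function.comp_apply]
    rw [h1]
    gcongr
    · exact hTnonneg N
    · exact hTmono (le_of_lt hklt)
  · -- upper bound
    filter_upwards [eventually_ge_atTop (M 2 + 1), eventually_ge_atTop 2,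
      (hKtop.eventually_ge_atTop 3)] with N hN hN2 hK3
    have hk := hKmem N
    have hklt := hKlt N (by omega)
    have hMk1 : (2:ℕ) ≤ M (K N - 1) := le_trans (by omega : 2 ≤ K N - 1) (hMle _)
    have hlogMk1 : (0:ℝ) < Real.log (M (K N - 1)) := Real.log_pos (by exact_mod_cast hMk1)
    have hlogle : Real.log (M (K N - 1)) ≤ Real.log N :=
      Real.log_le_log (by positivity) (by exact_mod_cast le_of_lt hklt)
    have h1 : (1 / Real.log N) * T N = T N / Real.log N := by ring
    simp only [Function.comp_apply]
    rw [h1]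
    gcongr
    · exact hTnonneg (M (K N))
    · exact hTmono hk
end

section
/- Let (M_k)_{k≥1} be a strictly increasing sequence of positive integers with M_{k+1}/M_k → c > 1 as k → ∞, and define μ_n = 1/M_k for M_{k-1} < n ≤ M_k (M_0 = 0). Then (1/Log N) · Σ_{n=1}^{N} μ_n → (c-1)/(c · Log c) as N → ∞. -/
open Filter Finset

theorem stmt_4 (M : ℕ → ℕ) (hM0 : M 0 = 0) (hmono : StrictMono M)
    (c : ℝ) (hc : 1 < c)
    (hratio : Tendsto (fun k => (M (k + 1) : ℝ) / (M k : ℝ)) atTop (nhds c))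
    (μ : ℕ → ℝ)
    (hμ : ∀ k n, 1 ≤ k → M (k - 1) < n → n ≤ M k → μ n = 1 / (M k : ℝ)) :
    Tendsto (fun N : ℕ => (1 / Real.log N) * ∑ n ∈ Finset.Icc 1 N, μ n)
      atTop (nhds ((c - 1) / (c * Real.log c))) := by
  have hc0 : (0:ℝ) < c := lt_trans zero_lt_one hc
  have hlogc : 0 < Real.log c := Real.log_pos hc
  set S : ℕ → ℝ := fun N => ∑ n ∈ Finset.Icc 1 N, μ n with hSdef
  have hMle : ∀ k, k ≤ M k := fun k => hmono.le_apply
  have hMposn : ∀ k, 1 ≤ k → 1 ≤ M k := fun k hk => le_trans hk (hMle k)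
  have hMpos : ∀ k, 1 ≤ k → (0:ℝ) < M k := fun k hk => by
    exact_mod_cast Nat.cast_pos.mpr (hMposn k hk)
  -- index function
  have hexists : ∀ N : ℕ, ∃ k, N ≤ M k := fun N => ⟨N, hMle N⟩
  set K : ℕ → ℕ := fun N => Nat.find (hexists N) with hKdef
  have hKspec : ∀ N, N ≤ M (K N) := fun N => Nat.find_spec (hexists N)
  have hKpos : ∀ N, 1 ≤ N → 1 ≤ K N := by
    intro N hN
    rcases Nat.eq_zero_or_pos (K N) with h | h
    · have h2 := hKspec N; rw [h, hM0] at h2; omega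
    · exact h
  have hKmin : ∀ N, 1 ≤ N → M (K N - 1) < N := by
    intro N hN
    have h1 := hKpos N hN
    have h2 := Nat.find_min (hexists N) (show K N - 1 < K N by omega)
    omega
  have hμK : ∀ N, 1 ≤ N → μ N = 1 / (M (K N) : ℝ) := fun N hN =>
    hμ (K N) N (hKpos N hN) (hKmin N hN) (hKspec N)
  have hμ0 : ∀ n, 1 ≤ n → 0 ≤ μ n := by
    intro n hn; rw [hμK n hn]; positivity
  have hSmono : Monotone S := by
    intro a b hab
    apply Finset.sum_le_sum_of_subset_of_nonneg (Finset.Icc_subset_Icc_right hab)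
    intro i hi _; exact hμ0 i (Finset.mem_Icc.mp hi).1
  have hSnonneg : ∀ N, 0 ≤ S N := fun N =>
    Finset.sum_nonneg (fun i hi => hμ0 i (Finset.mem_Icc.mp hi).1)
  set t : ℕ → ℝ := fun k => 1 - (M k : ℝ) / (M (k + 1) : ℝ) with htdef
  have hIcc : ∀ N : ℕ, Finset.Icc 1 N = Finset.Ioc 0 N := fun N => by
    rw [← Finset.Icc_add_one_left_eq_Ioc]; rfl
  have hSM : ∀ k : ℕ, S (M k) = ∑ i ∈ Finset.range k, t i := by
    intro k
    induction k with
    | zero => simp [hSdef, hM0]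
    | succ k ih =>
      have hmle : M k ≤ M (k + 1) := le_of_lt (hmono (Nat.lt_succ_self k))
      have hsplit : S (M (k + 1)) = S (M k) + ∑ n ∈ Finset.Ioc (M k) (M (k + 1)), μ n := by
        simp only [hSdef, hIcc]
        rw [← Finset.sum_Ioc_consecutive μ (Nat.zero_le (M k)) hmle]
      have hval : ∀ n ∈ Finset.Ioc (M k) (M (k + 1)), μ n = 1 / (M (k + 1) : ℝ) := by
        intro n hn
        rw [Finset.mem_Ioc] at hn
        exact hμ (k + 1) n (Nat.le_add_left 1 k) (by simpa using hn.1) hn.2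
      have hsum : ∑ n ∈ Finset.Ioc (M k) (M (k + 1)), μ n = t k := by
        rw [Finset.sum_congr rfl hval, Finset.sum_const, Nat.card_Ioc, nsmul_eq_mul]
        have hMne : (M (k + 1) : ℝ) ≠ 0 := ne_of_gt (hMpos (k + 1) (Nat.le_add_left 1 k))
        rw [Nat.cast_sub hmle, htdef]
        field_simp
      rw [Finset.sum_range_succ, ← ih, hsplit, hsum]
  -- limit of t
  have ht : Tendsto t atTop (nhds (1 - 1 / c)) := by
    have h1 : Tendsto (fun k => (M k : ℝ) / (M (k + 1) : ℝ)) atTop (nhds (1 / c)) := by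
      have h2 := hratio.inv₀ (ne_of_gt hc0)
      simpa [one_div, inv_div] using h2
    exact tendsto_const_nhds.sub h1
  have hA : Tendsto (fun k => S (M k) / (k : ℝ)) atTop (nhds (1 - 1 / c)) := by
    refine ht.cesaro.congr (fun k => ?_)
    rw [← hSM, inv_mul_eq_div]
  -- limit of log
  have hlogtend : Tendsto (fun k => Real.log (M (k + 1)) - Real.log (M k)) atTop
      (nhds (Real.log c)) := by
    have h1 : Tendsto (fun k => Real.log ((M (k + 1) : ℝ) / (M k : ℝ))) atTop
        (nhds (Real.log c)) := (Real.continuousAt_log (ne_of_gt hc0)).tendsto.comp hratio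
    refine h1.congr' ?_
    filter_upwards [eventually_ge_atTop 1] with k hk
    rw [Real.log_div (ne_of_gt (hMpos (k + 1) (Nat.le_add_left 1 k))) (ne_of_gt (hMpos k hk))]
  have hB : Tendsto (fun k => Real.log (M k) / (k : ℝ)) atTop (nhds (Real.log c)) := by
    refine hlogtend.cesaro.congr (fun k => ?_)
    rw [Finset.sum_range_sub (fun i => Real.log (M i)), hM0, Nat.cast_zero, Real.log_zero,
      sub_zero, inv_mul_eq_div]
  -- auxiliary limits
  have hAs : Tendsto (fun k => S (M (k + 1)) / ((k : ℝ) + 1)) atTop (nhds (1 - 1 / c)) := by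
    have := hA.comp (tendsto_add_atTop_nat 1)
    refine this.congr (fun k => ?_)
    simp [Function.comp]
  have hBs : Tendsto (fun k => Real.log (M (k + 1)) / ((k : ℝ) + 1)) atTop
      (nhds (Real.log c)) := by
    have := hB.comp (tendsto_add_atTop_nat 1)
    refine this.congr (fun k => ?_)
    simp [Function.comp]
  have hBi : Tendsto (fun k : ℕ => (k : ℝ) / Real.log (M k)) atTop (nhds (1 / Real.log c)) := by
    have := hB.inv₀ (ne_of_gt hlogc)
    simpa [one_div, inv_div] using this
  have hBsi : Tendsto (fun k : ℕ => ((k : ℝ) + 1) / Real.log (M (k + 1))) atTop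
      (nhds (1 / Real.log c)) := by
    have := hBs.inv₀ (ne_of_gt hlogc)
    simpa [one_div, inv_div] using this
  have hr1 : Tendsto (fun k : ℕ => (k : ℝ) / ((k : ℝ) + 1)) atTop (nhds 1) :=
    tendsto_natCast_div_add_atTop (1 : ℝ)
  have hr2 : Tendsto (fun k : ℕ => ((k : ℝ) + 1) / (k : ℝ)) atTop (nhds 1) := by
    have h4 := hr1.inv₀ one_ne_zero
    simp only [inv_div, inv_one] at h4
    exact h4
  set L : ℝ := (c - 1) / (c * Real.log c) with hLdef
  have hLval : (1 - 1 / c) * 1 * (1 / Real.log c) = L := by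
    rw [hLdef]
    field_simp
  -- sandwich sequences
  set g : ℕ → ℝ := fun j => S (M j) / Real.log (M (j + 1)) with hgdef
  set h : ℕ → ℝ := fun j => S (M (j + 1)) / Real.log (M j) with hhdef
  have hg : Tendsto g atTop (nhds L) := by
    have hprod := (hA.mul hr1).mul hBsi
    rw [hLval] at hprod
    refine hprod.congr' ?_
    filter_upwards [eventually_ge_atTop 1] with j hj
    have hj0 : (j : ℝ) ≠ 0 := Nat.cast_ne_zero.mpr (by omega)
    have hj1 : (j : ℝ) + 1 ≠ 0 := by positivity
    have hlog : Real.log (M (j + 1)) ≠ 0 := by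
      have : (1:ℝ) < M (j + 1) := by
        have : 2 ≤ M (j + 1) := le_trans (by omega) (hMle (j + 1))
        exact_mod_cast this
      exact ne_of_gt (Real.log_pos this)
    rw [hgdef]
    field_simp
  have hh : Tendsto h atTop (nhds L) := by
    have hprod := (hAs.mul hr2).mul hBi
    rw [hLval] at hprod
    refine hprod.congr' ?_
    filter_upwards [eventually_ge_atTop 2] with j hj
    have hj0 : (j : ℝ) ≠ 0 := Nat.cast_ne_zero.mpr (by omega)
    have hj1 : (j : ℝ) + 1 ≠ 0 := by positivity
    have hlog : Real.log (M j) ≠ 0 := by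
      have : (1:ℝ) < M j := by
        have : 2 ≤ M j := le_trans hj (hMle j)
        exact_mod_cast this
      exact ne_of_gt (Real.log_pos this)
    rw [hhdef]
    field_simp
  -- K tends to infinity
  have hKtop : Tendsto K atTop atTop := by
    rw [tendsto_atTop_atTop]
    intro b
    refine ⟨M b + 1, fun N hN => ?_⟩
    have h1 := hKspec N
    have h2 : M b < M (K N) := by omega
    exact le_of_lt (hmono.lt_iff_lt.mp h2)
  have hJtop : Tendsto (fun N => K N - 1) atTop atTop :=
    (tendsto_sub_atTop_nat 1).comp hKtop
  -- squeeze
  refine tendsto_of_tendsto_of_tendsto_of_le_of_le' (hg.comp hJtop) (hh.comp hJtop) ?_ ?_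
  · filter_upwards [hKtop.eventually_ge_atTop 3, eventually_ge_atTop 2] with N hK3 hN2
    have hN1 : 1 ≤ N := by omega
    have hJ1 : K N - 1 + 1 = K N := by have := hKpos N hN1; omega
    have hlogN : 0 < Real.log N := Real.log_pos (by exact_mod_cast hN2)
    have hle1 : S (M (K N - 1)) ≤ S N := hSmono (le_of_lt (hKmin N hN1))
    have hle2 : Real.log N ≤ Real.log (M (K N)) := by
      apply Real.log_le_log (by positivity)
      exact_mod_cast hKspec N
    have hfin : S (M (K N - 1)) / Real.log (M (K N)) ≤ S N / Real.log N :=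
      div_le_div₀ (hSnonneg N) hle1 hlogN hle2
    show g (K N - 1) ≤ 1 / Real.log N * S N
    rw [one_div, inv_mul_eq_div, hgdef]
    simpa only [hJ1] using hfin
  · filter_upwards [hKtop.eventually_ge_atTop 3, eventually_ge_atTop 2] with N hK3 hN2
    have hN1 : 1 ≤ N := by omega
    have hJ1 : K N - 1 + 1 = K N := by have := hKpos N hN1; omega
    have hlogJ : 0 < Real.log (M (K N - 1)) := by
      apply Real.log_pos
      have h5 : 2 ≤ M (K N - 1) := le_trans (by omega) (hMle (K N - 1))
      exact_mod_cast h5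
    have hle1 : S N ≤ S (M (K N)) := hSmono (hKspec N)
    have hle2 : Real.log (M (K N - 1)) ≤ Real.log N := by
      apply Real.log_le_log (hMpos (K N - 1) (by omega))
      exact_mod_cast le_of_lt (hKmin N hN1)
    have hfin : S N / Real.log N ≤ S (M (K N)) / Real.log (M (K N - 1)) :=
      div_le_div₀ (hSnonneg (M (K N))) hle1 hlogJ hle2
    show 1 / Real.log N * S N ≤ h (K N - 1)
    rw [one_div, inv_mul_eq_div, hhdef]
    simpa only [hJ1] using hfin
end

section
/- Let (M_k) with M_0 = 0 < M_1 < M_2 < ... be integers, set m_k = M_k - M_{k-1}, and suppose M_{k+1}/M_k → c as k → ∞ with c > 1. Then lim_{s↓1} (s-1) · Σ_{k≥1} m_k · M_k^{-s} = (c-1)/(c · Log c). -/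
open Filter

lemma aux1 (x : ℝ) : 1 - Real.exp (-x) ≤ x := by
  have := Real.add_one_le_exp (-x); linarith

lemma aux2 {x : ℝ} (hx : 0 < x) : x / (1 + x) ≤ 1 - Real.exp (-x) := by
  have h1 : (1:ℝ) + x ≤ Real.exp x := by linarith [Real.add_one_le_exp x]
  have h2 : Real.exp (-x) ≤ (1 + x)⁻¹ := by
    rw [Real.exp_neg]
    exact inv_anti₀ (by linarith) h1
  have h3 : x / (1 + x) = 1 - (1 + x)⁻¹ := by field_simp; ring
  linarith

lemma stepA (M : ℕ → ℕ) (hM0 : M 0 = 0) (hmono : StrictMono M)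
    (m : ℕ → ℕ) (hm : ∀ k, 1 ≤ k → m k = M k - M (k - 1))
    (c : ℝ) (hc : 1 < c)
    (hratio : Tendsto (fun k => (M (k + 1) : ℝ) / (M k : ℝ)) atTop (nhds c)) :
    Tendsto (fun k => (m (k + 1) : ℝ) / (M (k + 1) : ℝ)) atTop (nhds (1 - 1/c)) := by
  have hMpos : ∀ k : ℕ, 0 < M (k + 1) := fun k => hM0 ▸ hmono (Nat.succ_pos k)
  have h1 : Tendsto (fun k => (M k : ℝ) / (M (k + 1) : ℝ)) atTop (nhds (1/c)) := by
    have := hratio.inv₀ (by positivity)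
    simpa [inv_div, one_div] using this
  have h2 : Tendsto (fun k => 1 - (M k : ℝ) / (M (k + 1) : ℝ)) atTop (nhds (1 - 1/c)) :=
    tendsto_const_nhds.sub h1
  refine h2.congr fun k => ?_
  have hle : M k ≤ M (k + 1) := (hmono (Nat.lt_succ_self k)).le
  have hm' : (m (k + 1) : ℝ) = (M (k + 1) : ℝ) - (M k : ℝ) := by
    rw [hm (k + 1) (Nat.le_add_left 1 k)]
    push_cast [Nat.cast_sub hle]
    rfl
  have hMne : (M (k + 1) : ℝ) ≠ 0 := (Nat.cast_pos.mpr (hMpos k)).ne'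
  rw [hm', sub_div, div_self hMne]

lemma stepB (M : ℕ → ℕ) (hM0 : M 0 = 0) (hmono : StrictMono M)
    (c : ℝ) (hc : 1 < c)
    (hratio : Tendsto (fun k => (M (k + 1) : ℝ) / (M k : ℝ)) atTop (nhds c)) :
    Tendsto (fun k : ℕ => Real.log (M (k + 1)) / ((k : ℝ) + 1)) atTop (nhds (Real.log c)) := by
  have hMpos : ∀ k : ℕ, 0 < M (k + 1) := fun k => hM0 ▸ hmono (Nat.succ_pos k)
  set u : ℕ → ℝ := fun j => Real.log (M (j + 1)) - Real.log (M j) with hu_def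
  have hu : Tendsto u atTop (nhds (Real.log c)) := by
    have hlogcont : Tendsto (fun k => Real.log ((M (k + 1) : ℝ) / (M k : ℝ))) atTop
        (nhds (Real.log c)) :=
      ((Real.continuousAt_log (by positivity : (c:ℝ) ≠ 0)).tendsto).comp hratio
    refine hlogcont.congr' ?_
    filter_upwards [eventually_ge_atTop 1] with k hk
    obtain ⟨j, rfl⟩ : ∃ j, k = j + 1 := ⟨k - 1, (Nat.succ_pred_eq_of_pos hk).symm⟩
    have h1 : (M (j + 1) : ℝ) ≠ 0 := by have := hMpos j; positivity
    have h2 : (M (j + 1 + 1) : ℝ) ≠ 0 := by have := hMpos (j + 1); positivity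
    rw [Real.log_div h2 h1]
  have hces := hu.cesaro
  have hsum : ∀ n : ℕ, ∑ i ∈ Finset.range n, u i = Real.log (M n) := by
    intro n
    rw [Finset.sum_range_sub (fun j => Real.log (M j))]
    simp [hM0]
  have h3 : Tendsto (fun n : ℕ => Real.log (M n) / (n : ℝ)) atTop (nhds (Real.log c)) := by
    refine hces.congr fun n => ?_
    rw [hsum n, inv_mul_eq_div]
  have := h3.comp (tendsto_add_atTop_nat 1)
  refine this.congr fun k => ?_
  simp only [Function.comp]
  push_cast
  ring_nf

set_option maxHeartbeats 1000000 in
theorem stmt_5 (M : ℕ → ℕ) (hM0 : M 0 = 0) (hmono : StrictMono M)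
    (m : ℕ → ℕ) (hm : ∀ k, 1 ≤ k → m k = M k - M (k - 1))
    (c : ℝ) (hc : 1 < c)
    (hratio : Tendsto (fun k => (M (k + 1) : ℝ) / (M k : ℝ)) atTop (nhds c)) :
    Tendsto (fun s : ℝ => (s - 1) * ∑' k : ℕ, (m (k + 1) : ℝ) * (M (k + 1) : ℝ) ^ (-s))
      (nhdsWithin 1 (Set.Ioi 1)) (nhds ((c - 1) / (c * Real.log c))) := by
  have hMpos : ∀ k : ℕ, 0 < M (k + 1) := fun k => hM0 ▸ hmono (Nat.succ_pos k)
  have hMR : ∀ k : ℕ, (1:ℝ) ≤ (M (k + 1) : ℝ) := fun k => by exact_mod_cast hMpos k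
  have hc0 : (0:ℝ) < c := lt_trans one_pos hc
  have hLc : 0 < Real.log c := Real.log_pos hc
  set Lc := Real.log c with hLc_def
  have hr := stepA M hM0 hmono m hm c hc hratio
  have hlog1 := stepB M hM0 hmono c hc hratio
  have hc1 : 0 < 1 - 1/c := by
    have : 1/c < 1 := by rw [div_lt_one hc0]; exact hc
    linarith
  set T := (1 - 1/c) / Lc with hT_def
  have hT : (c - 1) / (c * Lc) = T := by
    rw [hT_def]
    field_simp
  rw [hT, Metric.tendsto_nhdsWithin_nhds]
  intro ε hε
  -- choose ε'
  obtain ⟨ε', hε'pos, hε'Lc, hε'A, hgu, hgl⟩ : ∃ e : ℝ, 0 < e ∧ e < Lc ∧ e < 1 - 1/c ∧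
      (1 - 1/c + e)/(Lc - e) < T + ε/2 ∧ T - ε/2 < (1 - 1/c - e)/(Lc + e) := by
    have h1 : Tendsto (fun e : ℝ => (1 - 1/c + e)/(Lc - e)) (nhds 0) (nhds T) := by
      have hnum : Tendsto (fun e : ℝ => 1 - 1/c + e) (nhds 0) (nhds (1 - 1/c)) := by
        simpa using (tendsto_const_nhds.add (tendsto_id : Tendsto (fun e : ℝ => e) (nhds 0) (nhds 0)))
      have hden : Tendsto (fun e : ℝ => Lc - e) (nhds 0) (nhds Lc) := by
        simpa using (tendsto_const_nhds.sub (tendsto_id : Tendsto (fun e : ℝ => e) (nhds 0) (nhds 0)))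
      exact hnum.div hden hLc.ne'
    have h2 : Tendsto (fun e : ℝ => (1 - 1/c - e)/(Lc + e)) (nhds 0) (nhds T) := by
      have hnum : Tendsto (fun e : ℝ => 1 - 1/c - e) (nhds 0) (nhds (1 - 1/c)) := by
        simpa using (tendsto_const_nhds.sub (tendsto_id : Tendsto (fun e : ℝ => e) (nhds 0) (nhds 0)))
      have hden : Tendsto (fun e : ℝ => Lc + e) (nhds 0) (nhds Lc) := by
        simpa using (tendsto_const_nhds.add (tendsto_id : Tendsto (fun e : ℝ => e) (nhds 0) (nhds 0)))
      exact hnum.div hden hLc.ne'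
    have e1 : ∀ᶠ e : ℝ in nhds 0, (1 - 1/c + e)/(Lc - e) < T + ε/2 :=
      h1.eventually (eventually_lt_nhds (by linarith))
    have e2 : ∀ᶠ e : ℝ in nhds 0, T - ε/2 < (1 - 1/c - e)/(Lc + e) :=
      h2.eventually (eventually_gt_nhds (by linarith))
    have e3 : ∀ᶠ e : ℝ in nhds 0, e < Lc := eventually_lt_nhds hLc
    have e4 : ∀ᶠ e : ℝ in nhds 0, e < 1 - 1/c := eventually_lt_nhds hc1
    have := ((((e1.and e2).and e3).and e4).filter_mono (nhdsWithin_le_nhds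
      (s := Set.Ioi (0:ℝ)))).and self_mem_nhdsWithin
    obtain ⟨e, ⟨⟨⟨he1, he2⟩, he3⟩, he4⟩, he5⟩ := this.exists
    exact ⟨e, he5, he3, he4, he1, he2⟩
  set A1 := 1 - 1/c - ε' with hA1_def
  set A2 := 1 - 1/c + ε' with hA2_def
  set α := Lc + ε' with hα_def
  set β := Lc - ε' with hβ_def
  have hA1 : 0 < A1 := by rw [hA1_def]; linarith
  have hA2 : 0 < A2 := by rw [hA2_def]; linarith
  have hα : 0 < α := by rw [hα_def]; linarith
  have hβ : 0 < β := by rw [hβ_def]; linarith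
  -- choose K
  have E1 : ∀ᶠ k : ℕ in atTop, A1 ≤ (m (k + 1) : ℝ) / (M (k + 1) : ℝ) ∧
      (m (k + 1) : ℝ) / (M (k + 1) : ℝ) ≤ A2 := by
    filter_upwards [Metric.tendsto_nhds.mp hr ε' hε'pos] with k hk
    rw [Real.dist_eq, abs_lt] at hk
    constructor <;> [skip; skip] <;> [linarith [hk.1, hk.2]; linarith [hk.1, hk.2]]
  have E2 : ∀ᶠ k : ℕ in atTop, β * ((k : ℝ) + 1) ≤ Real.log (M (k + 1)) ∧
      Real.log (M (k + 1)) ≤ α * ((k : ℝ) + 1) := by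
    filter_upwards [Metric.tendsto_nhds.mp hlog1 ε' hε'pos] with k hk
    rw [Real.dist_eq, abs_lt] at hk
    have hkpos : (0:ℝ) < (k : ℝ) + 1 := by positivity
    constructor
    · have : β < Real.log (M (k + 1)) / ((k : ℝ) + 1) := by rw [hβ_def]; linarith [hk.1]
      have := (lt_div_iff₀ hkpos).mp this
      linarith
    · have : Real.log (M (k + 1)) / ((k : ℝ) + 1) < α := by rw [hα_def]; linarith [hk.2]
      have := (div_lt_iff₀ hkpos).mp this
      linarith
  obtain ⟨K, hK⟩ := eventually_atTop.mp (E1.and E2)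
  -- choose δ
  set δ := min (ε/(2*((K:ℝ) + A2 + 1))) (ε/(2*(A1*((K:ℝ)+1) + 1))) with hδ_def
  have hδpos : 0 < δ := by
    apply lt_min <;> positivity
  refine ⟨δ, hδpos, ?_⟩
  intro s hs hds
  rw [Real.dist_eq, abs_lt] at hds
  have hs1 : 1 < s := hs
  set t := s - 1 with ht_def
  have ht : 0 < t := by rw [ht_def]; linarith
  have htδ : t < δ := by rw [ht_def]; linarith [hds.2]
  set ρ := Real.exp (-(t*α)) with hρ_def
  set σ := Real.exp (-(t*β)) with hσ_def
  have hρ0 : 0 < ρ := Real.exp_pos _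
  have hσ0 : 0 < σ := Real.exp_pos _
  have hρ1 : ρ < 1 := Real.exp_lt_one_iff.mpr (neg_lt_zero.mpr (by positivity))
  have hσ1 : σ < 1 := Real.exp_lt_one_iff.mpr (neg_lt_zero.mpr (by positivity))
  set f : ℕ → ℝ := fun k => (m (k + 1) : ℝ) * (M (k + 1) : ℝ) ^ (-s) with hf_def
  have hfk : ∀ k, f k = ((m (k + 1) : ℝ) / (M (k + 1) : ℝ)) *
      Real.exp (-(t * Real.log (M (k + 1)))) := by
    intro k
    have hM1 : (0:ℝ) < (M (k + 1) : ℝ) := Nat.cast_pos.mpr (hMpos k)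
    rw [hf_def]
    simp only
    rw [Real.rpow_def_of_pos hM1]
    have hsplit : Real.log (M (k + 1)) * (-s) =
        (-Real.log (M (k + 1))) + (-(t * Real.log (M (k + 1)))) := by
      rw [ht_def]; ring
    rw [hsplit, Real.exp_add, Real.exp_neg, Real.exp_log hM1]
    ring
  have hm_le : ∀ k : ℕ, m (k + 1) ≤ M (k + 1) := by
    intro k
    rw [hm (k + 1) (Nat.le_add_left 1 k)]
    exact Nat.sub_le _ _
  have hf_nonneg : ∀ k, 0 ≤ f k := by
    intro k; rw [hf_def]; positivity
  have hf_le_one : ∀ k, f k ≤ 1 := by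
    intro k
    rw [hfk k]
    have hM1 : (0:ℝ) < (M (k + 1) : ℝ) := Nat.cast_pos.mpr (hMpos k)
    have h1 : (m (k + 1) : ℝ) / (M (k + 1) : ℝ) ≤ 1 := by
      rw [div_le_one hM1]; exact_mod_cast hm_le k
    have h1' : 0 ≤ (m (k + 1) : ℝ) / (M (k + 1) : ℝ) := by positivity
    have h2 : Real.exp (-(t * Real.log (M (k + 1)))) ≤ 1 := by
      rw [Real.exp_le_one_iff]
      exact neg_nonpos.mpr (mul_nonneg ht.le (Real.log_nonneg (hMR k)))
    exact le_trans (mul_le_mul h1 h2 (Real.exp_pos _).le zero_le_one) (by norm_num)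
  have hpow : ∀ (x : ℝ) (k : ℕ), Real.exp x ^ (k + 1) = Real.exp (x * ((k:ℝ)+1)) := by
    intro x k
    rw [← Real.exp_nat_mul]
    congr 1
    push_cast
    ring
  have hupper : ∀ k, K ≤ k → f k ≤ A2 * σ^(k+1) := by
    intro k hk
    obtain ⟨⟨hr1, hr2⟩, ⟨hl1, hl2⟩⟩ := hK k hk
    rw [hfk k]
    have hE : Real.exp (-(t * Real.log (M (k + 1)))) ≤ σ^(k+1) := by
      rw [hσ_def, hpow]
      apply Real.exp_le_exp.mpr
      have := mul_le_mul_of_nonneg_left hl1 ht.le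
      linarith
    have h1' : 0 ≤ (m (k + 1) : ℝ) / (M (k + 1) : ℝ) := by positivity
    exact mul_le_mul hr2 hE (Real.exp_pos _).le hA2.le
  have hlower : ∀ k, K ≤ k → A1 * ρ^(k+1) ≤ f k := by
    intro k hk
    obtain ⟨⟨hr1, hr2⟩, ⟨hl1, hl2⟩⟩ := hK k hk
    rw [hfk k]
    have hE : ρ^(k+1) ≤ Real.exp (-(t * Real.log (M (k + 1)))) := by
      rw [hρ_def, hpow]
      apply Real.exp_le_exp.mpr
      have := mul_le_mul_of_nonneg_left hl2 ht.le
      linarith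
    have h1' : 0 ≤ (m (k + 1) : ℝ) / (M (k + 1) : ℝ) := by positivity
    have hr1' : 0 ≤ ρ^(k+1) := by positivity
    exact mul_le_mul hr1 hE hr1' h1'
  -- summability
  have hσ_sum : Summable (fun n : ℕ => σ^n) := summable_geometric_of_lt_one hσ0.le hσ1
  have hρ_sum : Summable (fun n : ℕ => ρ^n) := summable_geometric_of_lt_one hρ0.le hρ1
  have hf_sum : Summable f := by
    rw [← summable_nat_add_iff K]
    apply Summable.of_nonneg_of_le (fun n => hf_nonneg _)
      (fun n => ?_) (hσ_sum.mul_left (A2 * σ^(K+1)))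
    calc f (n + K) ≤ A2 * σ^(n + K + 1) := hupper _ (Nat.le_add_left K n)
      _ = A2 * σ^(K+1) * σ^n := by rw [show n + K + 1 = (K+1) + n by ring, pow_add]; ring
  have htail_sum : Summable (fun n => f (n + K)) := (summable_nat_add_iff K).mpr hf_sum
  have hsplit2 : ∑ i ∈ Finset.range K, f i + ∑' n, f (n + K) = ∑' k, f k :=
    Summable.sum_add_tsum_nat_add K hf_sum
  have hhead_le : ∑ i ∈ Finset.range K, f i ≤ (K:ℝ) := by
    calc ∑ i ∈ Finset.range K, f i ≤ ∑ _i ∈ Finset.range K, (1:ℝ) :=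
          Finset.sum_le_sum (fun i _ => hf_le_one i)
      _ = (K:ℝ) := by simp
  have hhead_ge : 0 ≤ ∑ i ∈ Finset.range K, f i :=
    Finset.sum_nonneg (fun i _ => hf_nonneg i)
  have htail_le : ∑' n, f (n + K) ≤ A2 * σ^(K+1) * (1-σ)⁻¹ := by
    have h1 : ∑' n, f (n + K) ≤ ∑' n, A2 * σ^(K+1) * σ^n := by
      apply Summable.tsum_le_tsum (fun n => ?_) htail_sum (hσ_sum.mul_left _)
      calc f (n + K) ≤ A2 * σ^(n + K + 1) := hupper _ (Nat.le_add_left K n)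
        _ = A2 * σ^(K+1) * σ^n := by rw [show n + K + 1 = (K+1) + n by ring, pow_add]; ring
    rwa [tsum_mul_left, tsum_geometric_of_lt_one hσ0.le hσ1] at h1
  have htail_ge : A1 * ρ^(K+1) * (1-ρ)⁻¹ ≤ ∑' n, f (n + K) := by
    have h1 : ∑' n, A1 * ρ^(K+1) * ρ^n ≤ ∑' n, f (n + K) := by
      apply Summable.tsum_le_tsum (fun n => ?_) (hρ_sum.mul_left _) htail_sum
      calc A1 * ρ^(K+1) * ρ^n = A1 * ρ^(n + K + 1) := by
            rw [show n + K + 1 = (K+1) + n by ring, pow_add]; ring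
        _ ≤ f (n + K) := hlower _ (Nat.le_add_left K n)
    rwa [tsum_mul_left, tsum_geometric_of_lt_one hρ0.le hρ1] at h1
  -- numeric estimates
  have h1σ : 0 < 1 - σ := by linarith
  have h1ρ : 0 < 1 - ρ := by linarith
  have htβ : 0 < t * β := by positivity
  have hts : t * (1-σ)⁻¹ ≤ (1 + t*β)/β := by
    have hx : t*β/(1 + t*β) ≤ 1 - σ := by
      have := aux2 htβ
      rw [hσ_def]
      linarith
    have hxpos : 0 < t*β/(1 + t*β) := by positivity
    have hinv : (1-σ)⁻¹ ≤ (t*β/(1 + t*β))⁻¹ := inv_anti₀ hxpos hx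
    have heq : (t*β/(1 + t*β))⁻¹ = (1 + t*β)/(t*β) := by rw [inv_div]
    calc t * (1-σ)⁻¹ ≤ t * ((1 + t*β)/(t*β)) := by
          rw [heq] at hinv
          exact mul_le_mul_of_nonneg_left hinv ht.le
      _ = (1 + t*β)/β := by field_simp
  have htρ : α⁻¹ ≤ t * (1-ρ)⁻¹ := by
    have h1ρ' : 1 - ρ ≤ t*α := by
      have := aux1 (t*α)
      rw [hρ_def]
      linarith
    have hinv : (t*α)⁻¹ ≤ (1-ρ)⁻¹ := inv_anti₀ h1ρ h1ρ'
    calc α⁻¹ = t * (t*α)⁻¹ := by field_simp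
      _ ≤ t * (1-ρ)⁻¹ := mul_le_mul_of_nonneg_left hinv ht.le
  have hρK : 1 - t*α*((K:ℝ)+1) ≤ ρ^(K+1) := by
    rw [hρ_def, hpow]
    have := Real.add_one_le_exp (-(t*α) * ((K:ℝ)+1))
    linarith
  have hσK : σ^(K+1) ≤ 1 := pow_le_one₀ hσ0.le hσ1.le
  have hρK0 : 0 ≤ ρ^(K+1) := by positivity
  -- final bounds
  set S := ∑' k, f k with hS_def
  have hUp : t * S ≤ t*(K:ℝ) + A2/β + A2*t := by
    have e1 : S ≤ (K:ℝ) + A2 * σ^(K+1) * (1-σ)⁻¹ := by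
      rw [← hsplit2]; linarith
    have e2 : t * S ≤ t*(K:ℝ) + A2 * σ^(K+1) * (t * (1-σ)⁻¹) := by
      have := mul_le_mul_of_nonneg_left e1 ht.le
      linarith
    have e3 : A2 * σ^(K+1) * (t * (1-σ)⁻¹) ≤ A2 * ((1 + t*β)/β) := by
      have hv : 0 ≤ t * (1-σ)⁻¹ := by positivity
      have : A2 * σ^(K+1) ≤ A2 := mul_le_of_le_one_right hA2.le hσK
      calc A2 * σ^(K+1) * (t * (1-σ)⁻¹) ≤ A2 * (t * (1-σ)⁻¹) :=
            mul_le_mul_of_nonneg_right this hv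
        _ ≤ A2 * ((1 + t*β)/β) := mul_le_mul_of_nonneg_left hts hA2.le
    have e4 : A2 * ((1 + t*β)/β) = A2/β + A2*t := by field_simp
    linarith
  have hLow : A1/α - A1*t*((K:ℝ)+1) ≤ t * S := by
    have e1 : A1 * ρ^(K+1) * (1-ρ)⁻¹ ≤ S := by
      rw [← hsplit2]; linarith
    have e2 : A1 * ρ^(K+1) * (t * (1-ρ)⁻¹) ≤ t * S := by
      have := mul_le_mul_of_nonneg_left e1 ht.le
      linarith
    have e3 : A1 * ρ^(K+1) * α⁻¹ ≤ A1 * ρ^(K+1) * (t * (1-ρ)⁻¹) :=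
      mul_le_mul_of_nonneg_left htρ (by positivity)
    have e4 : A1 * (1 - t*α*((K:ℝ)+1)) * α⁻¹ ≤ A1 * ρ^(K+1) * α⁻¹ := by
      have : A1 * (1 - t*α*((K:ℝ)+1)) ≤ A1 * ρ^(K+1) :=
        mul_le_mul_of_nonneg_left hρK hA1.le
      exact mul_le_mul_of_nonneg_right this (by positivity)
    have e5 : A1 * (1 - t*α*((K:ℝ)+1)) * α⁻¹ = A1/α - A1*t*((K:ℝ)+1) := by
      field_simp
    linarith
  -- finish
  have hA2β : A2/β < T + ε/2 := by rw [hA2_def, hβ_def]; exact hgu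
  have hA1α : T - ε/2 < A1/α := by rw [hA1_def, hα_def]; exact hgl
  have hδ1 : δ ≤ ε/(2*((K:ℝ) + A2 + 1)) := min_le_left _ _
  have hδ2 : δ ≤ ε/(2*(A1*((K:ℝ)+1) + 1)) := min_le_right _ _
  have hd1 : t*(K:ℝ) + A2*t < ε/2 := by
    have h0 : 0 < (K:ℝ) + A2 + 1 := by positivity
    have h2 : t * ((K:ℝ) + A2 + 1) < ε/2 := by
      calc t * ((K:ℝ) + A2 + 1) < ε / (2*((K:ℝ) + A2 + 1)) * ((K:ℝ) + A2 + 1) :=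
            mul_lt_mul_of_pos_right (lt_of_lt_of_le htδ hδ1) h0
        _ = ε/2 := by field_simp
    linarith
  have hd2 : A1*t*((K:ℝ)+1) < ε/2 := by
    have h0 : 0 < A1*((K:ℝ)+1) + 1 := by positivity
    have h2 : t * (A1*((K:ℝ)+1) + 1) < ε/2 := by
      calc t * (A1*((K:ℝ)+1) + 1) < ε / (2*(A1*((K:ℝ)+1) + 1)) * (A1*((K:ℝ)+1) + 1) :=
            mul_lt_mul_of_pos_right (lt_of_lt_of_le htδ hδ2) h0
        _ = ε/2 := by field_simp
    linarith
  clear_value Lc T A1 A2 α β δ t ρ σ f S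
  rw [Real.dist_eq, abs_lt]
  have hg1 : t * S ≤ (t * ↑K + A2 * t) + A2 / β := by linarith
  have hg2 : t * S < ε/2 + (T + ε/2) := by linarith
  have hg3 : (T - ε/2) - ε/2 < t * S := by linarith
  constructor
  · linarith
  · linarith
end

section
/- Let (M_k)_{k≥1} be a strictly increasing sequence of positive integers with M_{k+1}/M_k → 1, and define μ_n = 1/M_k for M_{k-1} < n ≤ M_k (M_0 = 0). Then for every real s > 1 the series Σ_n μ_n^s converges, and lim_{s↓1} (s-1) · Σ_n μ_n^s = 1. -/
open Filter

/-- The real zeta function `∑ 1/(n+1)^s` has residue 1 at `s = 1` from the right. -/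
lemma zetaR_key :
    Tendsto (fun s : ℝ => (s - 1) * ∑' n : ℕ, 1 / ((n : ℝ) + 1) ^ s)
      (nhdsWithin 1 (Set.Ioi 1)) (nhds 1) := by
  have h0 : Tendsto (fun s : ℝ => s - 1) (nhdsWithin 1 (Set.Ioi 1)) (nhds 0) := by
    have h := (continuous_sub_right (1 : ℝ)).tendsto 1
    simpa using h.mono_left (nhdsWithin_le_nhds (s := Set.Ioi (1:ℝ)))
  have hts : Tendsto ZetaAsymptotics.term_tsum (nhdsWithin 1 (Set.Ioi 1))
      (nhds (ZetaAsymptotics.term_tsum 1)) :=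
    (ZetaAsymptotics.continuousOn_term_tsum.continuousWithinAt Set.self_mem_Ici).mono_left
      (nhdsWithin_mono _ Set.Ioi_subset_Ici_self)
  have h1 : Tendsto (fun s : ℝ => 1 - s * ZetaAsymptotics.term_tsum s)
      (nhdsWithin 1 (Set.Ioi 1)) (nhds (1 - 1 * ZetaAsymptotics.term_tsum 1)) :=
    tendsto_const_nhds.sub ((tendsto_id.mono_left nhdsWithin_le_nhds).mul hts)
  have hc : Tendsto (fun s : ℝ => 1 + (s - 1) * (1 - s * ZetaAsymptotics.term_tsum s))
      (nhdsWithin 1 (Set.Ioi 1)) (nhds 1) := by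
    have := (tendsto_const_nhds (x := (1:ℝ)) (f := nhdsWithin (1:ℝ) (Set.Ioi 1))).add (h0.mul h1)
    simpa using this
  refine hc.congr' ?_
  filter_upwards [self_mem_nhdsWithin] with s hs
  have hs1 : (1 : ℝ) < s := hs
  have h := ZetaAsymptotics.zeta_limit_aux1 hs1
  have hne : s - 1 ≠ 0 := by linarith
  have h2 : (∑' n : ℕ, 1 / ((n : ℝ) + 1) ^ s)
      = (1 - s * ZetaAsymptotics.term_tsum s) + 1 / (s - 1) := by
    have h' : ZetaAsymptotics.term_tsum s = ZetaAsymptotics.termTSum s := rfl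
    rw [h']
    linarith [h]
  rw [h2, mul_add, mul_one_div, div_self hne]
  ring

theorem stmt_6 (M : ℕ → ℕ) (hM0 : M 0 = 0) (hmono : StrictMono M)
    (hratio : Tendsto (fun k => (M (k + 1) : ℝ) / (M k : ℝ)) atTop (nhds 1))
    (μ : ℕ → ℝ)
    (hμ : ∀ k n, 1 ≤ k → M (k - 1) < n → n ≤ M k → μ n = 1 / (M k : ℝ)) :
    (∀ s : ℝ, 1 < s → Summable (fun n : ℕ => μ (n + 1) ^ s)) ∧
      Tendsto (fun s : ℝ => (s - 1) * ∑' n : ℕ, μ (n + 1) ^ s)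
        (nhdsWithin 1 (Set.Ioi 1)) (nhds 1) := by
  -- every n+1 lies in a unique block (M (k-1), M k]
  have hex : ∀ n : ℕ, ∃ k, 1 ≤ k ∧ M (k - 1) < n + 1 ∧ n + 1 ≤ M k := by
    intro n
    have hE : ∃ k, n + 1 ≤ M k := ⟨n + 1, hmono.le_apply⟩
    set k := Nat.find hE with hk
    have hk1 : n + 1 ≤ M k := Nat.find_spec hE
    have hkmin : ∀ m, m < k → ¬ (n + 1 ≤ M m) := fun m hm => Nat.find_min hE hm
    have hkpos : 1 ≤ k := by
      by_contra h
      have hk0 : k = 0 := by omega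
      rw [hk0, hM0] at hk1; omega
    refine ⟨k, hkpos, ?_, hk1⟩
    have := hkmin (k - 1) (by omega)
    omega
  have hpos : ∀ n : ℕ, 0 < μ (n + 1) := by
    intro n
    obtain ⟨k, hk1, hlt, hle⟩ := hex n
    rw [hμ k (n + 1) hk1 hlt hle]
    have : 0 < M k := by omega
    positivity
  have hub : ∀ n : ℕ, μ (n + 1) ≤ 1 / ((n : ℝ) + 1) := by
    intro n
    obtain ⟨k, hk1, hlt, hle⟩ := hex n
    rw [hμ k (n + 1) hk1 hlt hle]
    apply one_div_le_one_div_of_le (by positivity)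
    exact_mod_cast hle
  -- summability of the comparison series
  have hZsum : ∀ s : ℝ, 1 < s → Summable (fun n : ℕ => 1 / ((n : ℝ) + 1) ^ s) := by
    intro s hs
    have h1 := (Real.summable_one_div_nat_rpow (p := s)).mpr hs
    have h2 := (summable_nat_add_iff 1).mpr h1
    simpa using h2
  have hμub : ∀ s : ℝ, 1 < s → ∀ n : ℕ, μ (n + 1) ^ s ≤ 1 / ((n : ℝ) + 1) ^ s := by
    intro s hs n
    have h := Real.rpow_le_rpow (hpos n).le (hub n) (by linarith)
    calc μ (n + 1) ^ s ≤ (1 / ((n : ℝ) + 1)) ^ s := h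
      _ = 1 / ((n : ℝ) + 1) ^ s := by
          rw [Real.div_rpow zero_le_one (by positivity), Real.one_rpow]
  have hsumμ : ∀ s : ℝ, 1 < s → Summable (fun n : ℕ => μ (n + 1) ^ s) := by
    intro s hs
    exact Summable.of_nonneg_of_le (fun n => Real.rpow_nonneg (hpos n).le s)
      (hμub s hs) (hZsum s hs)
  refine ⟨hsumμ, ?_⟩
  -- the limit
  rw [Metric.tendsto_nhds]
  intro ε hε
  set δ : ℝ := ε / 2 with hδdef
  have hδ : 0 < δ := by positivity
  have hδlt : 1 - ε < 1 / (1 + δ) := by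
    rw [lt_div_iff₀ (by linarith)]
    nlinarith
  -- get K so the ratio is close to 1
  obtain ⟨K₀, hK₀⟩ := (Metric.tendsto_atTop.mp hratio δ hδ)
  set K := K₀ + 1 with hKdef
  have hMKpos : ∀ k, K ≤ k → 0 < M k := by
    intro k hk
    have : k ≤ M k := hmono.le_apply
    omega
  have hrat : ∀ k, K ≤ k → (M (k + 1) : ℝ) < (1 + δ) * M k := by
    intro k hk
    have h := hK₀ k (by omega)
    rw [Real.dist_eq, abs_lt] at h
    have hMk : (0 : ℝ) < M k := by exact_mod_cast hMKpos k hk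
    have h2 : (M (k + 1) : ℝ) / M k < 1 + δ := by linarith [h.2]
    rw [div_lt_iff₀ hMk] at h2
    linarith
  set N := M (K + 1) with hNdef
  -- lower bound on μ beyond N
  have hlow : ∀ n : ℕ, N ≤ n → 1 / (1 + δ) * (1 / ((n : ℝ) + 1)) ≤ μ (n + 1) := by
    intro n hn
    obtain ⟨k, hk1, hlt, hle⟩ := hex n
    have hkK : K + 1 < k := by
      by_contra h
      push_neg at h
      have : M k ≤ M (K + 1) := hmono.monotone h
      omega
    have hk1K : K ≤ k - 1 := by omega
    have hkk : k - 1 + 1 = k := by omega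
    have hr := hrat (k - 1) hk1K
    rw [hkk] at hr
    have hMk1 : (M (k - 1) : ℝ) < (n : ℝ) + 1 := by exact_mod_cast hlt
    have hMk1nn : (0 : ℝ) ≤ (M (k - 1) : ℝ) := by positivity
    have hMk : (M k : ℝ) < (1 + δ) * ((n : ℝ) + 1) := by
      calc (M k : ℝ) < (1 + δ) * M (k - 1) := hr
        _ ≤ (1 + δ) * ((n : ℝ) + 1) := by nlinarith
    rw [hμ k (n + 1) hk1 hlt hle]
    have hMkpos : (0 : ℝ) < M k := by
      have : 0 < M k := by omega
      exact_mod_cast this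
    rw [div_mul_div_comm, one_mul]
    apply one_div_le_one_div_of_le hMkpos
    nlinarith
  -- notation
  set Z : ℝ → ℝ := fun s => ∑' n : ℕ, 1 / ((n : ℝ) + 1) ^ s with hZdef
  set T : ℝ → ℝ := fun s => ∑' n : ℕ, μ (n + 1) ^ s with hTdef
  -- upper bound pointwise
  have hupper : ∀ s : ℝ, 1 < s → (s - 1) * T s ≤ (s - 1) * Z s := by
    intro s hs
    apply mul_le_mul_of_nonneg_left _ (by linarith)
    exact Summable.tsum_le_tsum (hμub s hs) (hsumμ s hs) (hZsum s hs)
  -- lower bound pointwise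
  have hlower : ∀ s : ℝ, 1 < s →
      (1 + δ) ^ (-s) * ((s - 1) * Z s - (s - 1) * N) ≤ (s - 1) * T s := by
    intro s hs
    have hs0 : (0 : ℝ) ≤ s := by linarith
    have hsum1 := hsumμ s hs
    have hsumZ := hZsum s hs
    -- tail of T
    have htail : (∑' n : ℕ, μ (n + N + 1) ^ s) ≤ T s := by
      have h := Summable.sum_add_tsum_nat_add N hsum1
      have hhead : 0 ≤ ∑ i ∈ Finset.range N, μ (i + 1) ^ s :=
        Finset.sum_nonneg fun i _ => Real.rpow_nonneg (hpos i).le s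
      have : (∑' n : ℕ, μ (n + N + 1) ^ s) = ∑' n : ℕ, μ ((n + N) + 1) ^ s := by
        congr 1
      rw [this]
      linarith [h]
    -- termwise lower bound on the tail
    have hterm : ∀ n : ℕ,
        (1 + δ) ^ (-s) * (1 / ((n : ℝ) + N + 1) ^ s) ≤ μ (n + N + 1) ^ s := by
      intro n
      have hNn : N ≤ n + N := by omega
      have h := hlow (n + N) hNn
      have hnn : (0 : ℝ) ≤ 1 / (1 + δ) * (1 / ((n + N : ℕ) + 1 : ℝ)) := by positivity
      have h2 := Real.rpow_le_rpow hnn h hs0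
      have h3 : ((1 : ℝ) / (1 + δ) * (1 / ((n + N : ℕ) + 1 : ℝ))) ^ s
          = (1 + δ) ^ (-s) * (1 / ((n : ℝ) + N + 1) ^ s) := by
        rw [Real.mul_rpow (by positivity) (by positivity)]
        congr 1
        · rw [Real.div_rpow zero_le_one (by positivity), Real.one_rpow,
            Real.rpow_neg (by positivity), one_div]
        · rw [Real.div_rpow zero_le_one (by positivity), Real.one_rpow]
          congr 2
          push_cast
          ring
      rw [h3] at h2
      exact h2
    -- summability of the shifted series
    have hsumtail : Summable (fun n : ℕ => μ (n + N + 1) ^ s) := by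
      have := (summable_nat_add_iff (f := fun n : ℕ => μ (n + 1) ^ s) N).mpr hsum1
      simpa [add_right_comm] using this
    have hsumZtail : Summable (fun n : ℕ => 1 / ((n : ℝ) + N + 1) ^ s) := by
      have := (summable_nat_add_iff (f := fun n : ℕ => 1 / ((n : ℝ) + 1) ^ s) N).mpr hsumZ
      simpa [add_right_comm, add_assoc] using this
    have hsum2 : Summable (fun n : ℕ => (1 + δ) ^ (-s) * (1 / ((n : ℝ) + N + 1) ^ s)) :=
      hsumZtail.mul_left _
    have htail2 : (∑' n : ℕ, (1 + δ) ^ (-s) * (1 / ((n : ℝ) + N + 1) ^ s))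
        ≤ ∑' n : ℕ, μ (n + N + 1) ^ s :=
      Summable.tsum_le_tsum hterm hsum2 hsumtail
    -- compute the comparison tail
    have hZtail : (∑' n : ℕ, 1 / ((n : ℝ) + N + 1) ^ s)
        = Z s - ∑ i ∈ Finset.range N, 1 / ((i : ℝ) + 1) ^ s := by
      have h := Summable.sum_add_tsum_nat_add N hsumZ
      have : (∑' n : ℕ, 1 / ((n : ℝ) + N + 1) ^ s)
          = ∑' n : ℕ, 1 / (((n + N : ℕ) : ℝ) + 1) ^ s := by
        congr 1 with n
        push_cast
        ring_nf
      rw [this]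
      linarith [h]
    have hheadN : (∑ i ∈ Finset.range N, 1 / ((i : ℝ) + 1) ^ s) ≤ N := by
      calc (∑ i ∈ Finset.range N, 1 / ((i : ℝ) + 1) ^ s)
          ≤ ∑ i ∈ Finset.range N, (1 : ℝ) := by
            apply Finset.sum_le_sum
            intro i _
            rw [div_le_one (by positivity)]
            exact Real.one_le_rpow (by push_cast; linarith) hs0
        _ = N := by simp
    have hδs : (0 : ℝ) ≤ (1 + δ) ^ (-s) := Real.rpow_nonneg (by positivity) _
    have hchain : (1 + δ) ^ (-s) * (Z s - N) ≤ T s := by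
      calc (1 + δ) ^ (-s) * (Z s - N)
          ≤ (1 + δ) ^ (-s) * (Z s - ∑ i ∈ Finset.range N, 1 / ((i : ℝ) + 1) ^ s) := by
            apply mul_le_mul_of_nonneg_left _ hδs
            linarith
        _ = ∑' n : ℕ, (1 + δ) ^ (-s) * (1 / ((n : ℝ) + N + 1) ^ s) := by
            rw [tsum_mul_left, hZtail]
        _ ≤ ∑' n : ℕ, μ (n + N + 1) ^ s := htail2
        _ ≤ T s := htail
    have hs1' : (0 : ℝ) ≤ s - 1 := by linarith
    calc (1 + δ) ^ (-s) * ((s - 1) * Z s - (s - 1) * N)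
        = (s - 1) * ((1 + δ) ^ (-s) * (Z s - N)) := by ring
      _ ≤ (s - 1) * T s := mul_le_mul_of_nonneg_left hchain hs1'
  -- limit of the lower bound function
  have hcont : Tendsto (fun s : ℝ => (1 + δ) ^ (-s)) (nhdsWithin 1 (Set.Ioi 1))
      (nhds ((1 + δ) ^ (-1 : ℝ))) := by
    have : Continuous fun s : ℝ => (1 + δ) ^ (-s) :=
      continuous_const.rpow continuous_neg (fun x => Or.inl (by positivity))
    exact (this.tendsto 1).mono_left nhdsWithin_le_nhds
  have hNlim : Tendsto (fun s : ℝ => (s - 1) * (N : ℝ)) (nhdsWithin 1 (Set.Ioi 1)) (nhds 0) := by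
    have h := ((continuous_sub_right (1 : ℝ)).tendsto 1).mono_left
      (nhdsWithin_le_nhds (s := Set.Ioi (1:ℝ)))
    have h2 := h.mul_const (N : ℝ)
    simpa using h2
  have hZlim : Tendsto (fun s : ℝ => (s - 1) * Z s) (nhdsWithin 1 (Set.Ioi 1)) (nhds 1) :=
    zetaR_key
  have hglim : Tendsto (fun s : ℝ => (1 + δ) ^ (-s) * ((s - 1) * Z s - (s - 1) * N))
      (nhdsWithin 1 (Set.Ioi 1)) (nhds (1 / (1 + δ))) := by
    have := hcont.mul (hZlim.sub hNlim)
    simpa [Real.rpow_neg_one, one_div] using this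
  -- combine
  have hev1 : ∀ᶠ s in nhdsWithin (1:ℝ) (Set.Ioi 1), (s - 1) * Z s < 1 + ε :=
    hZlim.eventually_lt_const (by linarith)
  have hev2 : ∀ᶠ s in nhdsWithin (1:ℝ) (Set.Ioi 1),
      1 - ε < (1 + δ) ^ (-s) * ((s - 1) * Z s - (s - 1) * N) :=
    hglim.eventually_const_lt hδlt
  filter_upwards [hev1, hev2, self_mem_nhdsWithin] with s h1 h2 hs
  have hs1 : (1 : ℝ) < s := hs
  have hu := hupper s hs1
  have hl := hlower s hs1
  rw [Real.dist_eq, abs_lt]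
  constructor <;> [skip; skip] <;> nlinarith
end

section
/- Let (M_k) with M_0 = 0 < M_1 < M_2 < ... and let N : ℝ₊ → ℕ be the step function N(x) = M_k for λ̃_k ≤ x < λ̃_{k+1}, where (λ̃_k) is a strictly increasing unbounded sequence of positive reals. If there is a continuous function φ : ℝ₊ → ℝ₊ with N(x)/φ(x) → 1 as x → ∞, then M_{k+1}/M_k → 1 as k → ∞. -/
open Filter

theorem stmt_8 (lam : ℕ → ℝ) (hlampos : ∀ k, 1 ≤ k → 0 < lam k)
    (hlammono : StrictMono lam) (hlamtop : Tendsto lam atTop atTop)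
    (M : ℕ → ℕ) (hM0 : M 0 = 0) (hmono : StrictMono M)
    (N : ℝ → ℕ)
    (hN : ∀ k, 1 ≤ k → ∀ x : ℝ, lam k ≤ x → x < lam (k + 1) → N x = M k)
    (φ : ℝ → ℝ) (hφcont : ContinuousOn φ (Set.Ici 0)) (hφpos : ∀ x, 0 ≤ x → 0 < φ x)
    (hasymp : Tendsto (fun x => (N x : ℝ) / φ x) atTop (nhds 1)) :
    Tendsto (fun k : ℕ => (M (k + 1) : ℝ) / (M k : ℝ)) atTop (nhds 1) := by
  have hMpos : ∀ k, 1 ≤ k → 0 < M k := by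
    intro k hk
    have := hmono (show 0 < k from hk)
    omega
  rw [Metric.tendsto_atTop]
  intro ε' hε'
  set ε := min (ε' / 4) (1 / 2) with hεdef
  have hεpos : 0 < ε := lt_min (by linarith) (by norm_num)
  have hεhalf : ε ≤ 1 / 2 := min_le_right _ _
  have hε4 : 4 * ε ≤ ε' := by
    have : ε ≤ ε' / 4 := min_le_left _ _
    linarith
  obtain ⟨X, hX⟩ := Metric.tendsto_atTop.mp hasymp ε hεpos
  obtain ⟨K, hK⟩ := eventually_atTop.mp (hlamtop.eventually_ge_atTop X)
  refine ⟨max K 1, fun k hk => ?_⟩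
  have hk1 : 1 ≤ k := le_trans (le_max_right K 1) hk
  have hkK : K ≤ k := le_trans (le_max_left K 1) hk
  set c := lam (k + 1) with hc
  have hcpos : 0 < c := hlampos (k + 1) (by omega)
  have hlamk : X ≤ lam k := hK k hkK
  have hlkc : lam k < c := hlammono (by omega)
  have hclam2 : c < lam (k + 2) := hlammono (by omega)
  have hNc : N c = M (k + 1) := hN (k + 1) (by omega) c le_rfl hclam2
  have hXc : X ≤ c := le_trans hlamk hlkc.le
  have ha : dist ((M (k + 1) : ℝ) / φ c) 1 < ε := by
    have := hX c hXc
    rwa [hNc] at this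
  have hφc : 0 < φ c := hφpos c hcpos.le
  have hcont : ContinuousAt φ c := hφcont.continuousAt (Ici_mem_nhds hcpos)
  have htend : Tendsto (fun x => ((M k : ℝ)) / φ x) (nhdsWithin c (Set.Iio c))
      (nhds ((M k : ℝ) / φ c)) :=
    tendsto_const_nhds.div (hcont.tendsto.mono_left nhdsWithin_le_nhds) hφc.ne'
  have hev : ∀ᶠ x in nhdsWithin c (Set.Iio c), dist ((M k : ℝ) / φ x) 1 ≤ ε := by
    filter_upwards [Ico_mem_nhdsLT hlkc] with x hx
    have hNx : N x = M k := hN k hk1 x hx.1 hx.2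
    have := hX x (le_trans hlamk hx.1)
    rw [hNx] at this
    exact this.le
  have hb : dist ((M k : ℝ) / φ c) 1 ≤ ε :=
    le_of_tendsto (htend.dist tendsto_const_nhds) hev
  set a := (M (k + 1) : ℝ) / φ c with hadef
  set b := (M k : ℝ) / φ c with hbdef
  rw [Real.dist_eq] at ha hb
  obtain ⟨ha1, ha2⟩ := abs_lt.mp ha
  obtain ⟨hb1, hb2⟩ := abs_le.mp hb
  have hbge : (1 : ℝ) / 2 ≤ b := by linarith
  have hbpos : 0 < b := by linarith
  have hMk : (0 : ℝ) < M k := by exact_mod_cast hMpos k hk1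
  have key : (M (k + 1) : ℝ) / (M k : ℝ) = a / b := by
    rw [hadef, hbdef]
    field_simp
  rw [Real.dist_eq, key]
  have h1 : a / b - 1 = (a - b) / b := by field_simp
  rw [h1, abs_div, abs_of_pos hbpos, div_lt_iff₀ hbpos]
  have habs : |a - b| < 2 * ε := by
    rw [abs_lt]; constructor <;> linarith
  nlinarith [abs_nonneg (a - b)]
end

section
/- Let (λ̃_k) be a strictly increasing unbounded sequence of positive reals and (M_k) with M_0 = 0 < M_1 < M_2 < ... integers with M_{k+1}/M_k → 1 as k → ∞. Then there exists a continuous function φ : ℝ₊ → ℝ₊ such that the counting function N(x) = M_k for λ̃_k ≤ x < λ̃_{k+1} satisfies N(x)/φ(x) → 1 as x → ∞. -/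
open Filter

/-- Index: smallest `n` with `x < lam n`. -/
noncomputable def nkf (lam : ℕ → ℝ) (x : ℝ) : ℕ := sInf {n | x < lam n}

/-- Piecewise affine interpolation of `M` along `lam`. -/
noncomputable def phif (lam : ℕ → ℝ) (M : ℕ → ℕ) (x : ℝ) : ℝ :=
  if x < lam 1 then (M 1 : ℝ) + ((M 1 : ℝ) / (2 * lam 1)) * (x - lam 1)
  else (M (nkf lam x - 1) : ℝ) +
    ((M (nkf lam x) : ℝ) - (M (nkf lam x - 1) : ℝ)) * (x - lam (nkf lam x - 1)) /
      (lam (nkf lam x) - lam (nkf lam x - 1))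

section aux

variable {lam : ℕ → ℝ} {M : ℕ → ℕ} {x y : ℝ} {j n : ℕ}

lemma nkf_set_nonempty (hlamtop : Tendsto lam atTop atTop) (x : ℝ) :
    {n | x < lam n}.Nonempty :=
  (hlamtop.eventually_gt_atTop x).exists

lemma lt_lam_nkf (hlamtop : Tendsto lam atTop atTop) (x : ℝ) : x < lam (nkf lam x) :=
  Nat.sInf_mem (nkf_set_nonempty hlamtop x)

lemma nkf_ge (hlammono : StrictMono lam) (hlamtop : Tendsto lam atTop atTop)
    (h : lam n ≤ x) : n + 1 ≤ nkf lam x := by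
  by_contra hc
  push_neg at hc
  have h1 : x < lam (nkf lam x) := lt_lam_nkf hlamtop x
  have h2 : lam (nkf lam x) ≤ lam n := hlammono.monotone (Nat.lt_succ_iff.mp hc)
  linarith

lemma lam_nkf_pred_le (hlammono : StrictMono lam) (hlamtop : Tendsto lam atTop atTop)
    (h : lam n ≤ x) : lam (nkf lam x - 1) ≤ x := by
  have h1 : n + 1 ≤ nkf lam x := nkf_ge hlammono hlamtop h
  have h2 : nkf lam x - 1 < nkf lam x := by omega
  have := Nat.notMem_of_lt_sInf (s := {n | x < lam n}) h2
  simpa using this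

lemma nkf_eq (hlammono : StrictMono lam) (hlamtop : Tendsto lam atTop atTop)
    (h1 : lam j ≤ x) (h2 : x < lam (j + 1)) : nkf lam x = j + 1 :=
  le_antisymm (Nat.sInf_le h2) (nkf_ge hlammono hlamtop h1)

lemma phif_eq (hlammono : StrictMono lam) (hlamtop : Tendsto lam atTop atTop)
    (hj : 1 ≤ j) (h1 : lam j ≤ x) (h2 : x < lam (j + 1)) :
    phif lam M x = (M j : ℝ) + ((M (j + 1) : ℝ) - M j) * (x - lam j) / (lam (j + 1) - lam j) := by
  have hnot : ¬ x < lam 1 := not_lt.mpr ((hlammono.monotone hj).trans h1)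
  have hk : nkf lam x = j + 1 := nkf_eq hlammono hlamtop h1 h2
  simp [phif, hnot, hk]

lemma phif_bounds (hlammono : StrictMono lam) (hlamtop : Tendsto lam atTop atTop)
    (hmono : StrictMono M) (hj : 1 ≤ j) (h1 : lam j ≤ x) (h2 : x < lam (j + 1)) :
    (M j : ℝ) ≤ phif lam M x ∧ phif lam M x < M (j + 1) := by
  rw [phif_eq hlammono hlamtop hj h1 h2]
  have hden : (0:ℝ) < lam (j + 1) - lam j := sub_pos.mpr (hlammono (Nat.lt_succ_self j))
  have hnum : (0:ℝ) < (M (j + 1) : ℝ) - M j := by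
    have h := hmono (Nat.lt_succ_self j)
    have : (M j : ℝ) < M (j + 1) := by exact_mod_cast h
    linarith
  constructor
  · have hx0 : (0:ℝ) ≤ x - lam j := by linarith
    have : 0 ≤ ((M (j + 1) : ℝ) - M j) * (x - lam j) / (lam (j + 1) - lam j) :=
      div_nonneg (mul_nonneg hnum.le hx0) hden.le
    linarith
  · have hlt : ((M (j + 1) : ℝ) - M j) * (x - lam j) / (lam (j + 1) - lam j)
        < (M (j + 1) : ℝ) - M j := by
      rw [div_lt_iff₀ hden]
      have : x - lam j < lam (j + 1) - lam j := by linarith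
      calc ((M (j + 1) : ℝ) - M j) * (x - lam j)
          < ((M (j + 1) : ℝ) - M j) * (lam (j + 1) - lam j) := by
            exact mul_lt_mul_of_pos_left this hnum
        _ = _ := rfl
    linarith

lemma exists_idx (hlammono : StrictMono lam) (hlamtop : Tendsto lam atTop atTop)
    (hx : lam 1 ≤ x) : ∃ j, 1 ≤ j ∧ lam j ≤ x ∧ x < lam (j + 1) ∧ nkf lam x = j + 1 := by
  refine ⟨nkf lam x - 1, ?_, ?_, ?_, ?_⟩
  · have := nkf_ge hlammono hlamtop hx; omega
  · exact lam_nkf_pred_le hlammono hlamtop hx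
  · have h1 := lt_lam_nkf hlamtop x
    have h2 := nkf_ge hlammono hlamtop hx
    have h3 : nkf lam x - 1 + 1 = nkf lam x := by omega
    rwa [h3]
  · have := nkf_ge hlammono hlamtop hx; omega

lemma nkf_mono (hlamtop : Tendsto lam atTop atTop) (hab : x ≤ y) :
    nkf lam x ≤ nkf lam y :=
  Nat.sInf_le (lt_of_le_of_lt hab (lt_lam_nkf hlamtop y))

end aux

theorem stmt_9 (lam : ℕ → ℝ) (hlampos : ∀ k, 1 ≤ k → 0 < lam k)
    (hlammono : StrictMono lam) (hlamtop : Tendsto lam atTop atTop)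
    (M : ℕ → ℕ) (hM0 : M 0 = 0) (hmono : StrictMono M)
    (hratio : Tendsto (fun k : ℕ => (M (k + 1) : ℝ) / (M k : ℝ)) atTop (nhds 1))
    (N : ℝ → ℕ)
    (hN : ∀ k, 1 ≤ k → ∀ x : ℝ, lam k ≤ x → x < lam (k + 1) → N x = M k) :
    ∃ φ : ℝ → ℝ, ContinuousOn φ (Set.Ici 0) ∧ (∀ x, 0 ≤ x → 0 < φ x) ∧
      Tendsto (fun x => (N x : ℝ) / φ x) atTop (nhds 1) := by
  have hlam1 : (0:ℝ) < lam 1 := hlampos 1 le_rfl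
  have hM1 : 0 < M 1 := by have : M 0 < M 1 := hmono Nat.zero_lt_one; omega

  have hMpos : ∀ j, 1 ≤ j → 0 < M j := fun j hj => by
    have := hmono.monotone hj; omega
  have hM1R : (0:ℝ) < M 1 := by exact_mod_cast hM1
  set ε : ℝ := (M 1 : ℝ) / (2 * lam 1) with hε
  have hεpos : 0 < ε := by
    apply div_pos hM1R; positivity
  -- for every x ≥ lam 1, get index data
  have hidx : ∀ x : ℝ, lam 1 ≤ x → ∃ j, 1 ≤ j ∧ lam j ≤ x ∧ x < lam (j + 1) ∧
      nkf lam x = j + 1 := fun x hx => exists_idx hlammono hlamtop hx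
  have hbnd := fun {j : ℕ} {x : ℝ} => phif_bounds (lam := lam) (M := M) hlammono hlamtop hmono (j := j) (x := x)
  -- monotone
  have hphimono : Monotone (phif lam M) := by
    intro a b hab
    rcases lt_or_ge a (lam 1) with ha | ha
    · rcases lt_or_ge b (lam 1) with hb | hb
      · simp only [phif, if_pos ha, if_pos hb]
        nlinarith [hεpos.le]
      · obtain ⟨j, hj, hj1, hj2, _⟩ := hidx b hb
        have h1 : phif lam M a ≤ M 1 := by
          simp only [phif, if_pos ha]
          nlinarith [hεpos.le]
        have h2 : (M 1 : ℝ) ≤ M j := by exact_mod_cast hmono.monotone hj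
        have h3 := (hbnd hj hj1 hj2).1
        linarith
    · have hb : lam 1 ≤ b := le_trans ha hab
      obtain ⟨i, hi, hi1, hi2, hik⟩ := hidx a ha
      obtain ⟨j, hj, hj1, hj2, hjk⟩ := hidx b hb
      have hnk : nkf lam a ≤ nkf lam b := nkf_mono hlamtop hab
      have hij : i ≤ j := by omega
      rcases eq_or_lt_of_le hij with rfl | hij
      · rw [phif_eq hlammono hlamtop hi hi1 hi2, phif_eq hlammono hlamtop hi hj1 hj2]
        have hden : (0:ℝ) < lam (i + 1) - lam i := sub_pos.mpr (hlammono (Nat.lt_succ_self i))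
        have hnum : (0:ℝ) ≤ (M (i + 1) : ℝ) - M i := by
          have : (M i : ℝ) ≤ M (i+1) := by exact_mod_cast (hmono (Nat.lt_succ_self i)).le
          linarith
        have hle : ((M (i+1):ℝ) - M i) * (a - lam i) ≤ ((M (i+1):ℝ) - M i) * (b - lam i) :=
          mul_le_mul_of_nonneg_left (by linarith) hnum
        have key := mul_le_mul_of_nonneg_right hle (inv_nonneg.mpr hden.le)
        rw [← div_eq_mul_inv, ← div_eq_mul_inv] at key
        linarith
      · have h1 := (hbnd hi hi1 hi2).2
        have h2 := (hbnd hj hj1 hj2).1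
        have h3 : (M (i + 1) : ℝ) ≤ M j := by exact_mod_cast hmono.monotone hij
        linarith
  -- surjective
  have hMRmono : StrictMono (fun n => (M n : ℝ)) := fun a b h =>
    Nat.cast_lt.mpr (hmono h)
  have hMRtop : Tendsto (fun n => (M n : ℝ)) atTop atTop :=
    tendsto_natCast_atTop_atTop.comp hmono.tendsto_atTop
  have hsurj : Function.Surjective (phif lam M) := by
    intro y
    rcases lt_or_ge y (M 1) with hy | hy
    · refine ⟨lam 1 + (y - M 1) / ε, ?_⟩
      have hx : lam 1 + (y - M 1) / ε < lam 1 := by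
        have : (y - (M 1:ℝ)) / ε < 0 := div_neg_of_neg_of_pos (by linarith) hεpos
        linarith
      simp only [phif, if_pos hx]
      have h2 : 2 * lam 1 * ε = (M 1 : ℝ) := by
        rw [hε]; field_simp
      have hne := hεpos.ne'
      field_simp
      linear_combination ((M 1 : ℝ) - y) * h2
    · obtain ⟨j, hj, hj1, hj2, -⟩ := exists_idx (lam := fun n => (M n : ℝ)) hMRmono hMRtop hy
      have hden : (0:ℝ) < lam (j + 1) - lam j := sub_pos.mpr (hlammono (Nat.lt_succ_self j))
      have hnum : (0:ℝ) < (M (j + 1) : ℝ) - M j := by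
        have : (M j : ℝ) < M (j+1) := by exact_mod_cast hmono (Nat.lt_succ_self j)
        linarith
      set x := lam j + (y - M j) * (lam (j + 1) - lam j) / ((M (j + 1) : ℝ) - M j) with hxdef
      have hx1 : lam j ≤ x := by
        have : 0 ≤ (y - (M j:ℝ)) * (lam (j + 1) - lam j) / ((M (j + 1) : ℝ) - M j) :=
          div_nonneg (mul_nonneg (by linarith) hden.le) hnum.le
        simp only [hxdef]; linarith
      have hx2 : x < lam (j + 1) := by
        have h4 : (y - (M j:ℝ)) * (lam (j + 1) - lam j) / ((M (j + 1) : ℝ) - M j)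
            < lam (j + 1) - lam j := by
          rw [div_lt_iff₀ hnum]
          nlinarith
        simp only [hxdef]; linarith
      refine ⟨x, ?_⟩
      rw [phif_eq hlammono hlamtop hj hx1 hx2]
      have hxsub : x - lam j = (y - M j) * (lam (j + 1) - lam j) / ((M (j + 1) : ℝ) - M j) := by
        simp [hxdef]
      rw [hxsub]
      field_simp
      ring
  have hcont : Continuous (phif lam M) := hphimono.continuous_of_surjective hsurj
  -- positivity
  have hpos : ∀ x : ℝ, 0 ≤ x → 0 < phif lam M x := by
    intro x hx0
    rcases lt_or_ge x (lam 1) with hx | hx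
    · simp only [phif, if_pos hx]
      have hεlam : ε * lam 1 = (M 1 : ℝ) / 2 := by
        rw [hε]; field_simp [hlam1.ne']
      nlinarith [hεpos.le]
    · obtain ⟨j, hj, hj1, hj2, -⟩ := hidx x hx
      have h1 := (hbnd hj hj1 hj2).1
      have h2 : (M 1 : ℝ) ≤ M j := by exact_mod_cast hmono.monotone hj
      linarith
  -- φ definition
  refine ⟨phif lam M, hcont.continuousOn, hpos, ?_⟩
  -- the squeeze
  have hg : Tendsto (fun k : ℕ => (M k : ℝ) / M (k + 1)) atTop (nhds 1) := by
    have h := hratio.inv₀ one_ne_zero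
    rw [inv_one] at h
    refine h.congr fun k => ?_
    rw [inv_div]
  have hnktop : Tendsto (fun x : ℝ => nkf lam x - 1) atTop atTop := by
    rw [tendsto_atTop]
    intro b
    filter_upwards [eventually_ge_atTop (lam (b + 1))] with x hx
    have := nkf_ge hlammono hlamtop hx
    omega
  have hlow : Tendsto (fun x : ℝ => (M (nkf lam x - 1) : ℝ) / M (nkf lam x)) atTop (nhds 1) := by
    refine (hg.comp hnktop).congr' ?_
    filter_upwards [eventually_ge_atTop (lam 1)] with x hx
    have h1 := nkf_ge hlammono hlamtop hx
    have h2 : nkf lam x - 1 + 1 = nkf lam x := by omega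
    simp only [Function.comp_apply, h2]
  refine tendsto_of_tendsto_of_tendsto_of_le_of_le' hlow tendsto_const_nhds ?_ ?_
  · filter_upwards [eventually_ge_atTop (lam 1)] with x hx
    obtain ⟨j, hj, hj1, hj2, hjk⟩ := hidx x hx
    have hNx : N x = M j := hN j hj x hj1 hj2
    obtain ⟨hb1, hb2⟩ := hbnd hj hj1 hj2
    have hφpos : (0:ℝ) < phif lam M x := by
      have h2 : (0:ℝ) < M j := by exact_mod_cast hMpos j hj
      linarith
    have hMj1pos : (0:ℝ) < M (j + 1) := by exact_mod_cast hMpos (j+1) (by omega)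
    have hMjnn : (0:ℝ) ≤ M j := by positivity
    rw [hjk]
    simp only [Nat.add_sub_cancel, hNx]
    exact div_le_div_of_nonneg_left hMjnn hφpos hb2.le
  · filter_upwards [eventually_ge_atTop (lam 1)] with x hx
    obtain ⟨j, hj, hj1, hj2, hjk⟩ := hidx x hx
    have hNx : N x = M j := hN j hj x hj1 hj2
    obtain ⟨hb1, hb2⟩ := hbnd hj hj1 hj2
    have hφpos : (0:ℝ) < phif lam M x := by
      have h2 : (0:ℝ) < M j := by exact_mod_cast hMpos j hj
      linarith
    rw [hNx]
    exact (div_le_one hφpos).mpr hb1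
end

section
/- Let p ≥ 2 and set m_k = 2p(2p-1)^{k-1} and M_k = (2p/(2p-2))((2p-1)^k - 1) for k ≥ 1. Then for real s > 1 the series ζ(s) = Σ_{k≥1} m_k M_k^{-s} converges, and lim_{s↓1} (s-1)·ζ(s) = (2p-2)/((2p-1)·Log(2p-1)). -/
open Filter

lemma aux_zeta (a q c : ℝ) (ha : 0 < a) (hq : 3 ≤ q) (hc : 1 ≤ c) :
    (∀ s : ℝ, 1 < s →
      Summable (fun k : ℕ => a * q ^ k * (c * (q ^ (k + 1) - 1)) ^ (-s))) ∧
    Tendsto (fun s : ℝ => (s - 1) * ∑' k : ℕ, a * q ^ k * (c * (q ^ (k + 1) - 1)) ^ (-s))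
      (nhdsWithin 1 (Set.Ioi 1)) (nhds (a / (c * q * Real.log q))) := by
  have hq1 : (1:ℝ) < q := by linarith
  have hq0 : (0:ℝ) < q := by linarith
  have hc0 : (0:ℝ) < c := by linarith
  have hpk : ∀ k : ℕ, (1:ℝ) ≤ q ^ k := fun k => one_le_pow₀ hq1.le
  have hpk3 : ∀ k : ℕ, (3:ℝ) ≤ q ^ (k + 1) := fun k =>
    le_trans hq (le_self_pow₀ hq1.le (Nat.succ_ne_zero k))
  have hx_lb : ∀ k : ℕ, q ^ k ≤ c * (q ^ (k + 1) - 1) := by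
    intro k
    have h1 : q ^ (k + 1) = q ^ k * q := pow_succ q k
    have h2 : q ^ k ≤ q ^ (k + 1) - 1 := by
      nlinarith [mul_le_mul_of_nonneg_right (hpk k) (by linarith : (0:ℝ) ≤ q - 1)]
    calc q ^ k ≤ q ^ (k + 1) - 1 := h2
      _ ≤ c * (q ^ (k + 1) - 1) := le_mul_of_one_le_left (by nlinarith [hpk k]) hc
  have hx_pos : ∀ k : ℕ, (0:ℝ) < c * (q ^ (k + 1) - 1) :=
    fun k => lt_of_lt_of_le (by positivity) (hx_lb k)
  have hx1 : ∀ k : ℕ, (1:ℝ) ≤ c * (q ^ (k + 1) - 1) :=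
    fun k => le_trans (hpk k) (hx_lb k)
  have hx_ub : ∀ k : ℕ, c * (q ^ (k + 1) - 1) ≤ c * q ^ (k + 1) := by
    intro k; nlinarith [hpk3 k]
  -- rewrite of q^k * (q^k)^(-s)
  have hgeom : ∀ s : ℝ, ∀ k : ℕ, (q:ℝ) ^ k * ((q:ℝ) ^ k) ^ (-s) = (q ^ (1 - s)) ^ k := by
    intro s k
    rw [← Real.rpow_natCast q k, ← Real.rpow_mul hq0.le,
      ← Real.rpow_natCast (q ^ (1 - s)) k, ← Real.rpow_mul hq0.le,
      ← Real.rpow_add hq0]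
    congr 1
    ring
  have hr0 : ∀ s : ℝ, (0:ℝ) < q ^ (1 - s) := fun s => Real.rpow_pos_of_pos hq0 _
  have hr1 : ∀ s : ℝ, 1 < s → q ^ (1 - s) < 1 :=
    fun s hs => Real.rpow_lt_one_of_one_lt_of_neg hq1 (by linarith)
  have hf_nonneg : ∀ s : ℝ, ∀ k : ℕ, 0 ≤ a * q ^ k * (c * (q ^ (k + 1) - 1)) ^ (-s) := by
    intro s k
    have := hx_pos k
    positivity
  have hf_le : ∀ s : ℝ, 1 < s → ∀ k : ℕ,
      a * q ^ k * (c * (q ^ (k + 1) - 1)) ^ (-s) ≤ a * (q ^ (1 - s)) ^ k := by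
    intro s hs k
    have h1 : (c * (q ^ (k + 1) - 1)) ^ (-s) ≤ ((q:ℝ) ^ k) ^ (-s) :=
      Real.rpow_le_rpow_of_nonpos (by positivity) (hx_lb k) (by linarith)
    calc a * q ^ k * (c * (q ^ (k + 1) - 1)) ^ (-s)
        ≤ a * q ^ k * ((q:ℝ) ^ k) ^ (-s) := by
          apply mul_le_mul_of_nonneg_left h1 (by positivity)
      _ = a * (q ^ (1 - s)) ^ k := by rw [mul_assoc, hgeom s k]
  have hsumf : ∀ s : ℝ, 1 < s →
      Summable (fun k : ℕ => a * q ^ k * (c * (q ^ (k + 1) - 1)) ^ (-s)) := by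
    intro s hs
    exact Summable.of_nonneg_of_le (hf_nonneg s) (hf_le s hs)
      ((summable_geometric_of_lt_one (hr0 s).le (hr1 s hs)).mul_left a)
  refine ⟨hsumf, ?_⟩
  -- the comparison series g
  have hg_eq : ∀ s : ℝ, ∀ k : ℕ, a * q ^ k * (c * q ^ (k + 1)) ^ (-s)
      = (a * c ^ (-s) * q ^ (-s)) * (q ^ (1 - s)) ^ k := by
    intro s k
    rw [Real.mul_rpow hc0.le (by positivity), pow_succ,
      Real.mul_rpow (by positivity : (0:ℝ) ≤ q ^ k) hq0.le]
    rw [show a * q ^ k * (c ^ (-s) * (((q:ℝ) ^ k) ^ (-s) * q ^ (-s)))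
        = a * c ^ (-s) * q ^ (-s) * (q ^ k * ((q:ℝ) ^ k) ^ (-s)) by ring, hgeom s k]
  have hsum_g : ∀ s : ℝ, 1 < s →
      Summable (fun k : ℕ => a * q ^ k * (c * q ^ (k + 1)) ^ (-s)) := by
    intro s hs
    exact (summable_congr (hg_eq s)).mpr
      ((summable_geometric_of_lt_one (hr0 s).le (hr1 s hs)).mul_left _)
  have htsum_g : ∀ s : ℝ, 1 < s → ∑' k : ℕ, a * q ^ k * (c * q ^ (k + 1)) ^ (-s)
      = (a * c ^ (-s) * q ^ (-s)) * (1 - q ^ (1 - s))⁻¹ := by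
    intro s hs
    rw [tsum_congr (hg_eq s), tsum_mul_left,
      tsum_geometric_of_lt_one (hr0 s).le (hr1 s hs)]
  -- nonnegativity of the error term
  have hh_nonneg : ∀ s : ℝ, 1 < s → ∀ k : ℕ,
      0 ≤ a * q ^ k * (c * (q ^ (k + 1) - 1)) ^ (-s) - a * q ^ k * (c * q ^ (k + 1)) ^ (-s) := by
    intro s hs k
    have h1 : (c * q ^ (k + 1)) ^ (-s) ≤ (c * (q ^ (k + 1) - 1)) ^ (-s) :=
      Real.rpow_le_rpow_of_nonpos (hx_pos k) (hx_ub k) (by linarith)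
    have h2 : (0:ℝ) ≤ a * q ^ k := by positivity
    have := mul_le_mul_of_nonneg_left h1 h2
    linarith
  -- the uniform bound on the error term for 1 < s ≤ 2
  have hh_le : ∀ s : ℝ, 1 < s → s ≤ 2 → ∀ k : ℕ,
      a * q ^ k * (c * (q ^ (k + 1) - 1)) ^ (-s) - a * q ^ k * (c * q ^ (k + 1)) ^ (-s)
        ≤ 2 * a * (q⁻¹) ^ k := by
    intro s hs1 hs2 k
    set x := c * (q ^ (k + 1) - 1) with hxdef
    set y := c * q ^ (k + 1) with hydef
    have hxpos : 0 < x := hx_pos k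
    have hypos : 0 < y := by rw [hydef]; positivity
    have hxy : x ≤ y := hx_ub k
    have hqk1pos : (0:ℝ) < q ^ (k + 1) := by positivity
    have hy_eq : y ^ (-s) = x ^ (-s) * (x / y) ^ s := by
      rw [Real.div_rpow hxpos.le hypos.le, Real.rpow_neg hxpos.le, Real.rpow_neg hypos.le]
      have hxs : x ^ s ≠ 0 := (Real.rpow_pos_of_pos hxpos s).ne'
      field_simp
    have hxy01 : 0 < x / y := div_pos hxpos hypos
    have hxy1 : x / y ≤ 1 := (div_le_one hypos).mpr hxy
    have hts : (x / y) ^ (2:ℝ) ≤ (x / y) ^ s :=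
      Real.rpow_le_rpow_of_exponent_ge hxy01 hxy1 hs2
    rw [show (2:ℝ) = ((2:ℕ):ℝ) by norm_num, Real.rpow_natCast] at hts
    have h1my : 1 - x / y = (q ^ (k + 1))⁻¹ := by
      rw [hxdef, hydef]
      field_simp
      ring
    have hub : 1 - (x / y) ^ s ≤ 2 * (q ^ (k + 1))⁻¹ := by
      have h3 : 1 - (x / y) ^ (2:ℕ) ≤ 2 * (1 - x / y) := by nlinarith [hxy1, hxy01.le]
      rw [h1my] at h3
      nlinarith [hts]
    have hxs_pos : 0 < x ^ (-s) := Real.rpow_pos_of_pos hxpos _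
    have key : x ^ (-s) - y ^ (-s) ≤ x ^ (-s) * (2 * (q ^ (k + 1))⁻¹) := by
      rw [hy_eq]
      have h := mul_le_mul_of_nonneg_left hub hxs_pos.le
      nlinarith [h]
    have hx_inv : x ^ (-s) ≤ (q ^ k)⁻¹ := by
      have h1 : x ^ (-s) ≤ x ^ (-1:ℝ) :=
        Real.rpow_le_rpow_of_exponent_le (hx1 k) (by linarith)
      rw [Real.rpow_neg_one] at h1
      refine h1.trans ?_
      have hqkpos : (0:ℝ) < q ^ k := by positivity
      exact inv_anti₀ hqkpos (hx_lb k)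
    have hqkne : ((q:ℝ) ^ k) ≠ 0 := by positivity
    calc a * q ^ k * x ^ (-s) - a * q ^ k * y ^ (-s)
        = a * q ^ k * (x ^ (-s) - y ^ (-s)) := by ring
      _ ≤ a * q ^ k * (x ^ (-s) * (2 * (q ^ (k + 1))⁻¹)) := by
          apply mul_le_mul_of_nonneg_left key (by positivity)
      _ ≤ a * q ^ k * ((q ^ k)⁻¹ * (2 * (q ^ (k + 1))⁻¹)) := by
          apply mul_le_mul_of_nonneg_left
            (mul_le_mul_of_nonneg_right hx_inv (by positivity)) (by positivity)
      _ = 2 * a * (q ^ (k + 1))⁻¹ := by field_simp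
      _ ≤ 2 * a * (q ^ k)⁻¹ := by
          have hle : (q:ℝ) ^ k ≤ q ^ (k + 1) := pow_le_pow_right₀ hq1.le (by omega)
          have : ((q:ℝ) ^ (k + 1))⁻¹ ≤ (q ^ k)⁻¹ :=
            inv_anti₀ (by positivity) hle
          nlinarith [this]
      _ = 2 * a * (q⁻¹) ^ k := by rw [inv_pow]
  -- summable geometric bound
  have hqinv1 : q⁻¹ < 1 := inv_lt_one_of_one_lt₀ hq1
  have hbsum : Summable (fun k : ℕ => 2 * a * (q⁻¹) ^ k) :=
    (summable_geometric_of_lt_one (by positivity) hqinv1).mul_left _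
  -- error tsum bound
  have hsum_h : ∀ s : ℝ, 1 < s →
      Summable (fun k : ℕ =>
        a * q ^ k * (c * (q ^ (k + 1) - 1)) ^ (-s) - a * q ^ k * (c * q ^ (k + 1)) ^ (-s)) :=
    fun s hs => (hsumf s hs).sub (hsum_g s hs)
  have hT_nonneg : ∀ s : ℝ, 1 < s → 0 ≤ ∑' k : ℕ,
      (a * q ^ k * (c * (q ^ (k + 1) - 1)) ^ (-s) - a * q ^ k * (c * q ^ (k + 1)) ^ (-s)) :=
    fun s hs => tsum_nonneg (hh_nonneg s hs)
  have hT_bound : ∀ s : ℝ, 1 < s → s ≤ 2 → (∑' k : ℕ,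
      (a * q ^ k * (c * (q ^ (k + 1) - 1)) ^ (-s) - a * q ^ k * (c * q ^ (k + 1)) ^ (-s)))
        ≤ ∑' k : ℕ, 2 * a * (q⁻¹) ^ k :=
    fun s hs1 hs2 => Summable.tsum_le_tsum (hh_le s hs1 hs2) (hsum_h s hs1) hbsum
  -- Part B : error contribution tends to 0
  have hs_mem : ∀ᶠ s : ℝ in nhdsWithin 1 (Set.Ioi 1), 1 < s := self_mem_nhdsWithin
  have hs_le2 : ∀ᶠ s : ℝ in nhdsWithin 1 (Set.Ioi 1), s ≤ 2 :=
    ((eventually_lt_nhds (by norm_num : (1:ℝ) < 2)).mono fun s h => h.le).filter_mono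
      nhdsWithin_le_nhds
  have hB : Tendsto (fun s : ℝ => (s - 1) * ∑' k : ℕ,
      (a * q ^ k * (c * (q ^ (k + 1) - 1)) ^ (-s) - a * q ^ k * (c * q ^ (k + 1)) ^ (-s)))
      (nhdsWithin 1 (Set.Ioi 1)) (nhds 0) := by
    apply squeeze_zero'
    · filter_upwards [hs_mem] with s hs
      exact mul_nonneg (by linarith) (hT_nonneg s hs)
    · filter_upwards [hs_mem, hs_le2] with s hs hs2
      exact mul_le_mul_of_nonneg_left (hT_bound s hs hs2) (by linarith)
    · have h1 : Tendsto (fun s : ℝ => (s - 1) * ∑' k : ℕ, 2 * a * (q⁻¹) ^ k)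
          (nhds 1) (nhds ((1 - 1) * ∑' k : ℕ, 2 * a * (q⁻¹) ^ k)) :=
        ((continuous_id.sub continuous_const).mul continuous_const).tendsto 1
      rw [show ((1:ℝ) - 1) * ∑' k : ℕ, 2 * a * (q⁻¹) ^ k = 0 by ring] at h1
      exact h1.mono_left nhdsWithin_le_nhds
  -- Part A : main contribution
  have hphi : HasDerivAt (fun s : ℝ => 1 - q ^ (1 - s)) (Real.log q) 1 := by
    have h1 : HasDerivAt (fun s : ℝ => (1:ℝ) - s) (-1) 1 := (hasDerivAt_id 1).const_sub 1
    have h2 : HasDerivAt (fun y : ℝ => q ^ y) (q ^ ((1:ℝ) - 1) * Real.log q) ((1:ℝ) - 1) :=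
      (Real.hasStrictDerivAt_const_rpow hq0 _).hasDerivAt
    have h3 := h2.comp 1 h1
    simp only [Function.comp_def] at h3
    have h4 := h3.const_sub 1
    exact h4.congr_deriv (by norm_num)
  have hslope := hasDerivAt_iff_tendsto_slope.mp hphi
  have hslope' : Tendsto (slope (fun s : ℝ => 1 - q ^ (1 - s)) 1)
      (nhdsWithin 1 (Set.Ioi 1)) (nhds (Real.log q)) :=
    hslope.mono_left (nhdsWithin_mono 1 (fun x hx => ne_of_gt hx))
  have hlogq : Real.log q ≠ 0 := (Real.log_pos hq1).ne'
  have hF2 : Tendsto (fun s : ℝ => (s - 1) * (1 - q ^ (1 - s))⁻¹)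
      (nhdsWithin 1 (Set.Ioi 1)) (nhds (Real.log q)⁻¹) := by
    apply (hslope'.inv₀ hlogq).congr'
    filter_upwards [hs_mem] with s hs
    rw [slope_def_field]
    rw [show (1:ℝ) - (1:ℝ) = 0 from sub_self 1, Real.rpow_zero, sub_self, sub_zero, inv_div,
      div_eq_mul_inv]
  have hF1 : Tendsto (fun s : ℝ => a * c ^ (-s) * q ^ (-s))
      (nhdsWithin 1 (Set.Ioi 1)) (nhds (a * c⁻¹ * q⁻¹)) := by
    have h1 : ContinuousAt (fun s : ℝ => a * c ^ (-s) * q ^ (-s)) 1 := by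
      apply ContinuousAt.mul
      · exact continuousAt_const.mul
          ((Real.continuousAt_const_rpow hc0.ne').comp continuousAt_id.neg)
      · exact (Real.continuousAt_const_rpow hq0.ne').comp continuousAt_id.neg
    have h2 : Tendsto (fun s : ℝ => a * c ^ (-s) * q ^ (-s)) (nhdsWithin 1 (Set.Ioi 1))
        (nhds (a * c ^ (-(1:ℝ)) * q ^ (-(1:ℝ)))) :=
      h1.tendsto.mono_left nhdsWithin_le_nhds
    simpa [Real.rpow_neg_one] using h2
  have hA : Tendsto (fun s : ℝ => (s - 1) * ∑' k : ℕ, a * q ^ k * (c * q ^ (k + 1)) ^ (-s))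
      (nhdsWithin 1 (Set.Ioi 1)) (nhds (a / (c * q * Real.log q))) := by
    have hmul := hF1.mul hF2
    have hval : a * c⁻¹ * q⁻¹ * (Real.log q)⁻¹ = a / (c * q * Real.log q) := by
      field_simp
    rw [hval] at hmul
    apply hmul.congr'
    filter_upwards [hs_mem] with s hs
    rw [htsum_g s hs]
    ring
  -- combine
  have hfinal := hA.add hB
  rw [add_zero] at hfinal
  apply hfinal.congr'
  filter_upwards [hs_mem] with s hs
  have hsplit : (∑' k : ℕ, a * q ^ k * (c * (q ^ (k + 1) - 1)) ^ (-s))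
      = (∑' k : ℕ, a * q ^ k * (c * q ^ (k + 1)) ^ (-s))
        + ∑' k : ℕ, (a * q ^ k * (c * (q ^ (k + 1) - 1)) ^ (-s)
            - a * q ^ k * (c * q ^ (k + 1)) ^ (-s)) := by
    rw [← Summable.tsum_add (hsum_g s hs) (hsum_h s hs)]
    exact tsum_congr fun k => by ring
  rw [hsplit]
  ring

theorem stmt_11 (p : ℕ) (hp : 2 ≤ p) :
    (∀ s : ℝ, 1 < s →
      Summable (fun k : ℕ =>
        (2 * p * (2 * p - 1 : ℝ) ^ k) *
          ((2 * p / (2 * p - 2) : ℝ) * ((2 * p - 1 : ℝ) ^ (k + 1) - 1)) ^ (-s))) ∧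
    Tendsto (fun s : ℝ => (s - 1) *
        ∑' k : ℕ, (2 * p * (2 * p - 1 : ℝ) ^ k) *
          ((2 * p / (2 * p - 2) : ℝ) * ((2 * p - 1 : ℝ) ^ (k + 1) - 1)) ^ (-s))
      (nhdsWithin 1 (Set.Ioi 1))
      (nhds ((2 * p - 2) / ((2 * p - 1) * Real.log (2 * p - 1)))) := by
  have hp2 : (2:ℝ) ≤ (p:ℝ) := by exact_mod_cast hp
  have hc : (1:ℝ) ≤ 2 * (p:ℝ) / (2 * (p:ℝ) - 2) := by
    rw [le_div_iff₀ (by linarith)]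
    linarith
  have h := aux_zeta (2 * (p:ℝ)) (2 * (p:ℝ) - 1) (2 * (p:ℝ) / (2 * (p:ℝ) - 2))
    (by linarith) (by linarith) hc
  refine ⟨h.1, ?_⟩
  have hlog : Real.log (2 * (p:ℝ) - 1) ≠ 0 :=
    (Real.log_pos (by linarith)).ne'
  have hconst : (2 * (p:ℝ) - 2) / ((2 * (p:ℝ) - 1) * Real.log (2 * (p:ℝ) - 1))
      = 2 * (p:ℝ) / (2 * (p:ℝ) / (2 * (p:ℝ) - 2) * (2 * (p:ℝ) - 1) * Real.log (2 * (p:ℝ) - 1)) := by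
    have h2p2 : (2 * (p:ℝ) - 2) ≠ 0 := by linarith
    rw [div_eq_div_iff]
    · have h2p : (2 * (p:ℝ) - 2) * (2 * (p:ℝ) / (2 * (p:ℝ) - 2)) = 2 * (p:ℝ) := mul_div_cancel₀ _ h2p2
      linear_combination (2 * (p:ℝ) - 1) * Real.log (2 * (p:ℝ) - 1) * h2p
    · have h1 : (0:ℝ) < 2 * (p:ℝ) - 1 := by linarith
      have h2 : 0 < Real.log (2 * (p:ℝ) - 1) := Real.log_pos (by linarith)
      positivity
    · have h1 : (0:ℝ) < 2 * (p:ℝ) / (2 * (p:ℝ) - 2) := by positivity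
      have h2 : (0:ℝ) < 2 * (p:ℝ) - 1 := by linarith
      have h3 : 0 < Real.log (2 * (p:ℝ) - 1) := Real.log_pos (by linarith)
      positivity
  rw [hconst]
  exact h.2
end

section
/- Let (λ̃_k) be a strictly increasing unbounded sequence of positive reals with spectral gaps uniformly bounded below: liminf_{k→∞}(λ̃_{k+1} - λ̃_k) > 0. Let (M_k) be integers, M_0 = 0 < M_1 < ..., with m_k/M_k → 0 where m_k = M_k - M_{k-1}. Then the piecewise affine interpolation φ with φ(λ̃_k) = M_k is increasing, locally Lipschitz, asymptotic to the counting function, and satisfies ess-limsup_{x→∞} φ'(x)/φ(x) = 0. -/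
open Filter MeasureTheory

noncomputable def auxSlope (lam : ℕ → ℝ) (M : ℕ → ℕ) (k : ℕ) : ℝ :=
  ((M (k+1) : ℝ) - M k) / (lam (k+1) - lam k)

section Aux

variable {lam : ℕ → ℝ} {M : ℕ → ℕ} {φ : ℝ → ℝ}

lemma aux_gap (hlammono : StrictMono lam) (k : ℕ) : 0 < lam (k+1) - lam k :=
  sub_pos.2 (hlammono (Nat.lt_succ_self k))

lemma aux_slope_nonneg (hlammono : StrictMono lam) (hMmono : StrictMono M) (k : ℕ) :
    0 ≤ auxSlope lam M k := by
  apply div_nonneg _ (aux_gap hlammono k).le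
  have : (M k : ℝ) ≤ M (k+1) := by exact_mod_cast (hMmono (Nat.lt_succ_self k)).le
  linarith

lemma aux_seg (hlammono : StrictMono lam) (hlamtop : Tendsto lam atTop atTop)
    {x : ℝ} (hx : lam 1 ≤ x) : ∃ k, 1 ≤ k ∧ lam k ≤ x ∧ x < lam (k+1) := by
  classical
  have hex : ∃ n, x < lam n := by
    obtain ⟨n, hn⟩ := (tendsto_atTop.1 hlamtop (x+1)).exists
    exact ⟨n, by linarith⟩
  have hn : x < lam (Nat.find hex) := Nat.find_spec hex
  have h0 : lam 0 < lam 1 := hlammono one_pos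
  have hn1 : 2 ≤ Nat.find hex := by
    by_contra h
    push_neg at h
    have : Nat.find hex = 0 ∨ Nat.find hex = 1 := by omega
    rcases this with h' | h' <;> rw [h'] at hn <;> linarith
  refine ⟨Nat.find hex - 1, by omega, ?_, ?_⟩
  · have := Nat.find_min hex (m := Nat.find hex - 1) (by omega)
    push_neg at this
    exact this
  · have h : Nat.find hex - 1 + 1 = Nat.find hex := by omega
    rw [h]; exact hn

lemma aux_phi_seg (hlammono : StrictMono lam)
    (hφ : ∀ k, 1 ≤ k → ∀ x ∈ Set.Icc (lam k) (lam (k + 1)),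
      φ x = (M k : ℝ) + (x - lam k) * ((M (k + 1) : ℝ) - (M k : ℝ)) / (lam (k + 1) - lam k))
    {k : ℕ} (hk : 1 ≤ k) {x : ℝ} (hx : x ∈ Set.Icc (lam k) (lam (k+1))) :
    φ x = (M k : ℝ) + (x - lam k) * auxSlope lam M k := by
  rw [hφ k hk x hx, mul_div_assoc]; rfl

lemma aux_phi_lam (hlammono : StrictMono lam)
    (hφ : ∀ k, 1 ≤ k → ∀ x ∈ Set.Icc (lam k) (lam (k + 1)),
      φ x = (M k : ℝ) + (x - lam k) * ((M (k + 1) : ℝ) - (M k : ℝ)) / (lam (k + 1) - lam k))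
    {k : ℕ} (hk : 1 ≤ k) : φ (lam k) = M k := by
  have := aux_phi_seg hlammono hφ hk (x := lam k)
    ⟨le_refl _, (hlammono (Nat.lt_succ_self k)).le⟩
  simpa using this

lemma aux_phi_lam_succ (hlammono : StrictMono lam)
    (hφ : ∀ k, 1 ≤ k → ∀ x ∈ Set.Icc (lam k) (lam (k + 1)),
      φ x = (M k : ℝ) + (x - lam k) * ((M (k + 1) : ℝ) - (M k : ℝ)) / (lam (k + 1) - lam k))
    {k : ℕ} (hk : 1 ≤ k) : φ (lam (k+1)) = M (k+1) := by
  have h := aux_phi_seg hlammono hφ hk (x := lam (k+1))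
    ⟨(hlammono (Nat.lt_succ_self k)).le, le_refl _⟩
  rw [h, auxSlope, mul_div_assoc']
  rw [mul_comm, mul_div_assoc, div_self (aux_gap hlammono k).ne', mul_one]
  ring

lemma aux_phi_lb (hlammono : StrictMono lam) (hMmono : StrictMono M)
    (hφ : ∀ k, 1 ≤ k → ∀ x ∈ Set.Icc (lam k) (lam (k + 1)),
      φ x = (M k : ℝ) + (x - lam k) * ((M (k + 1) : ℝ) - (M k : ℝ)) / (lam (k + 1) - lam k))
    {k : ℕ} (hk : 1 ≤ k) {x : ℝ} (hx : x ∈ Set.Icc (lam k) (lam (k+1))) :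
    (M k : ℝ) ≤ φ x := by
  rw [aux_phi_seg hlammono hφ hk hx]
  have h1 : 0 ≤ x - lam k := by linarith [hx.1]
  have h2 := aux_slope_nonneg (M := M) hlammono hMmono k
  nlinarith

lemma aux_phi_ub (hlammono : StrictMono lam) (hMmono : StrictMono M)
    (hφ : ∀ k, 1 ≤ k → ∀ x ∈ Set.Icc (lam k) (lam (k + 1)),
      φ x = (M k : ℝ) + (x - lam k) * ((M (k + 1) : ℝ) - (M k : ℝ)) / (lam (k + 1) - lam k))
    {k : ℕ} (hk : 1 ≤ k) {x : ℝ} (hx : x ∈ Set.Icc (lam k) (lam (k+1))) :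
    φ x ≤ (M (k+1) : ℝ) := by
  have h := aux_phi_lam_succ (M := M) (φ := φ) hlammono hφ hk
  rw [aux_phi_seg hlammono hφ hk hx]
  rw [aux_phi_seg hlammono hφ hk ⟨(hlammono (Nat.lt_succ_self k)).le, le_refl _⟩] at h
  have h1 : x - lam k ≤ lam (k+1) - lam k := by linarith [hx.2]
  have h2 := aux_slope_nonneg (M := M) hlammono hMmono k
  nlinarith

lemma aux_mono (hlammono : StrictMono lam) (hlamtop : Tendsto lam atTop atTop)
    (hMmono : StrictMono M)
    (hφ : ∀ k, 1 ≤ k → ∀ x ∈ Set.Icc (lam k) (lam (k + 1)),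
      φ x = (M k : ℝ) + (x - lam k) * ((M (k + 1) : ℝ) - (M k : ℝ)) / (lam (k + 1) - lam k)) :
    MonotoneOn φ (Set.Ici (lam 1)) := by
  intro x hx y hy hxy
  obtain ⟨k, hk1, hkx, hkx'⟩ := aux_seg hlammono hlamtop hx
  obtain ⟨l, hl1, hly, hly'⟩ := aux_seg hlammono hlamtop hy
  have hkl : k ≤ l := by
    by_contra h
    push_neg at h
    have : lam (l+1) ≤ lam k := hlammono.monotone (by omega)
    linarith
  rcases eq_or_lt_of_le hkl with rfl | hkl
  · rw [aux_phi_seg hlammono hφ hk1 ⟨hkx, hkx'.le⟩,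
      aux_phi_seg hlammono hφ hk1 ⟨hly, hly'.le⟩]
    have hs := aux_slope_nonneg (M := M) hlammono hMmono k
    nlinarith
  · have h1 : φ x ≤ (M (k+1) : ℝ) := aux_phi_ub hlammono hMmono hφ hk1 ⟨hkx, hkx'.le⟩
    have h2 : (M l : ℝ) ≤ φ y := aux_phi_lb hlammono hMmono hφ hl1 ⟨hly, hly'.le⟩
    have h3 : (M (k+1) : ℝ) ≤ M l := by exact_mod_cast hMmono.monotone (by omega)
    linarith

lemma aux_lipkey (hlammono : StrictMono lam) (hMmono : StrictMono M)
    (hφ : ∀ k, 1 ≤ k → ∀ x ∈ Set.Icc (lam k) (lam (k + 1)),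
      φ x = (M k : ℝ) + (x - lam k) * ((M (k + 1) : ℝ) - (M k : ℝ)) / (lam (k + 1) - lam k)) :
    ∀ l, 1 ≤ l → ∀ x y : ℝ, lam 1 ≤ x → x ≤ y → y ≤ lam (l+1) →
      φ y - φ x ≤ (∑ j ∈ Finset.Icc 1 l, auxSlope lam M j) * (y - x) := by
  have hs : ∀ k, 0 ≤ auxSlope lam M k := aux_slope_nonneg hlammono hMmono
  have hC0 : ∀ l, 0 ≤ ∑ j ∈ Finset.Icc 1 l, auxSlope lam M j :=
    fun l => Finset.sum_nonneg fun j _ => hs j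
  intro l hl
  induction l, hl using Nat.le_induction with
  | base =>
    intro x y hx hxy hy
    have hxy2 : x ≤ lam 2 := le_trans hxy hy
    have hEq : φ y - φ x = auxSlope lam M 1 * (y - x) := by
      rw [aux_phi_seg hlammono hφ le_rfl (x := y) ⟨le_trans hx hxy, hy⟩,
        aux_phi_seg hlammono hφ le_rfl (x := x) ⟨hx, hxy2⟩]
      ring
    rw [hEq]
    simp
  | succ l hl IH =>
    intro x y hx hxy hy
    have hsum : ∑ j ∈ Finset.Icc 1 (l+1), auxSlope lam M j
        = (∑ j ∈ Finset.Icc 1 l, auxSlope lam M j) + auxSlope lam M (l+1) :=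
      Finset.sum_Icc_succ_top (by omega) _
    rcases le_or_gt y (lam (l+1)) with hyl | hyl
    · have h1 := IH x y hx hxy hyl
      have h2 : (∑ j ∈ Finset.Icc 1 l, auxSlope lam M j) * (y - x)
          ≤ (∑ j ∈ Finset.Icc 1 (l+1), auxSlope lam M j) * (y - x) := by
        apply mul_le_mul_of_nonneg_right _ (by linarith)
        rw [hsum]
        linarith [hs (l+1)]
      linarith
    · rcases le_or_gt (lam (l+1)) x with hxl | hxl
      · have hEq : φ y - φ x = auxSlope lam M (l+1) * (y - x) := by
          rw [aux_phi_seg hlammono hφ (by omega) (x := y) ⟨le_trans hxl hxy, hy⟩,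
            aux_phi_seg hlammono hφ (by omega) (x := x) ⟨hxl, le_trans hxy hy⟩]
          ring
        rw [hEq]
        apply mul_le_mul_of_nonneg_right _ (by linarith)
        rw [hsum]
        linarith [hC0 l]
      · have h1 : φ y - φ (lam (l+1)) = auxSlope lam M (l+1) * (y - lam (l+1)) := by
          rw [aux_phi_seg hlammono hφ (by omega) (x := y) ⟨hyl.le, hy⟩,
            aux_phi_lam hlammono hφ (k := l+1) (by omega)]
          ring
        have h2 : φ (lam (l+1)) - φ x ≤ (∑ j ∈ Finset.Icc 1 l, auxSlope lam M j) * (lam (l+1) - x) :=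
          IH x (lam (l+1)) hx hxl.le le_rfl
        have h3 : auxSlope lam M (l+1) * (y - lam (l+1))
            ≤ (∑ j ∈ Finset.Icc 1 (l+1), auxSlope lam M j) * (y - lam (l+1)) := by
          apply mul_le_mul_of_nonneg_right _ (by linarith)
          rw [hsum]; linarith [hC0 l]
        have h4 : (∑ j ∈ Finset.Icc 1 l, auxSlope lam M j) * (lam (l+1) - x)
            ≤ (∑ j ∈ Finset.Icc 1 (l+1), auxSlope lam M j) * (lam (l+1) - x) := by
          apply mul_le_mul_of_nonneg_right _ (by linarith)
          rw [hsum]; linarith [hs (l+1)]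
        nlinarith

end Aux

theorem stmt_15 (lam : ℕ → ℝ) (hlampos : ∀ k, 1 ≤ k → 0 < lam k)
    (hlammono : StrictMono lam) (hlamtop : Tendsto lam atTop atTop)
    (hgap : 0 < liminf (fun k : ℕ => lam (k + 1) - lam k) atTop)
    (M : ℕ → ℕ) (hM0 : M 0 = 0) (hMmono : StrictMono M)
    (m : ℕ → ℕ) (hm : ∀ k, 1 ≤ k → m k = M k - M (k - 1))
    (hrel : Tendsto (fun k : ℕ => (m k : ℝ) / (M k : ℝ)) atTop (nhds 0))
    (N : ℝ → ℕ)
    (hN : ∀ k, 1 ≤ k → ∀ x : ℝ, lam k ≤ x → x < lam (k + 1) → N x = M k)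
    (φ : ℝ → ℝ)
    (hφ : ∀ k, 1 ≤ k → ∀ x ∈ Set.Icc (lam k) (lam (k + 1)),
      φ x = (M k : ℝ) + (x - lam k) * ((M (k + 1) : ℝ) - (M k : ℝ)) / (lam (k + 1) - lam k)) :
    MonotoneOn φ (Set.Ici (lam 1)) ∧
    (∀ K : Set ℝ, IsCompact K → K ⊆ Set.Ici (lam 1) → ∃ C : NNReal, LipschitzOnWith C φ K) ∧
    Tendsto (fun x => (N x : ℝ) / φ x) atTop (nhds 1) ∧
    (∀ ε > (0 : ℝ), ∃ R : ℝ, ∀ᵐ x ∂(volume : Measure ℝ), R ≤ x → deriv φ x ≤ ε * φ x) := by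
  have hmono := aux_mono hlammono hlamtop hMmono hφ
  refine ⟨hmono, ?_, ?_, ?_⟩
  · -- Lipschitz on compacts
    intro K hK hK1
    rcases K.eq_empty_or_nonempty with rfl | hne
    · exact ⟨0, by simp⟩
    obtain ⟨b, hb⟩ := hK.bddAbove
    obtain ⟨l, hlb, hl1⟩ := ((tendsto_atTop.1 hlamtop b).and (eventually_ge_atTop 1)).exists
    set C := ∑ j ∈ Finset.Icc 1 l, auxSlope lam M j with hC
    have hC0 : 0 ≤ C := Finset.sum_nonneg fun j _ => aux_slope_nonneg hlammono hMmono j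
    refine ⟨C.toNNReal, LipschitzOnWith.of_dist_le_mul ?_⟩
    intro x hx y hy
    have hcoe : (C.toNNReal : ℝ) = C := Real.coe_toNNReal _ hC0
    rw [Real.dist_eq, Real.dist_eq, hcoe]
    have key : ∀ u v : ℝ, u ∈ K → v ∈ K → u ≤ v → |φ u - φ v| ≤ C * |u - v| := by
      intro u v hu hv huv
      have h1 : φ u ≤ φ v := hmono (hK1 hu) (hK1 hv) huv
      have h2 : φ v - φ u ≤ C * (v - u) := by
        apply aux_lipkey hlammono hMmono hφ l hl1 u v (hK1 hu) huv
        have : v ≤ b := hb hv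
        have : lam l ≤ lam (l+1) := (hlammono (Nat.lt_succ_self l)).le
        linarith
      rw [abs_sub_comm, abs_of_nonneg (by linarith), abs_sub_comm, abs_of_nonneg (by linarith)]
      exact h2
    rcases le_total x y with h | h
    · exact key x y hx hy h
    · rw [abs_sub_comm, abs_sub_comm x y]
      exact key y x hy hx h
  · -- ratio tends to 1
    have hMge : ∀ k, k ≤ M k := fun k => hMmono.le_apply
    refine Metric.tendsto_nhds.mpr fun ε hε => ?_
    have h2 : ∀ᶠ j in atTop, (m j : ℝ) / (M j : ℝ) < ε := by
      filter_upwards [Metric.tendsto_nhds.mp hrel ε hε] with j hj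
      rw [Real.dist_eq, sub_zero] at hj
      exact lt_of_abs_lt hj
    obtain ⟨K, hK⟩ := eventually_atTop.1 h2
    refine eventually_atTop.2 ⟨max (lam 1) (lam K), fun x hx => ?_⟩
    have hx1 : lam 1 ≤ x := le_trans (le_max_left _ _) hx
    obtain ⟨k, hk1, hkx, hkx'⟩ := aux_seg hlammono hlamtop hx1
    have hkK : K ≤ k := by
      by_contra h
      push_neg at h
      have h1 : lam (k+1) ≤ lam K := hlammono.monotone (by omega)
      have h2 : lam K ≤ x := le_trans (le_max_right _ _) hx
      linarith
    have hNx : N x = M k := hN k hk1 x hkx hkx'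
    have hlb : (M k : ℝ) ≤ φ x := aux_phi_lb hlammono hMmono hφ hk1 ⟨hkx, hkx'.le⟩
    have hub : φ x ≤ (M (k+1) : ℝ) := aux_phi_ub hlammono hMmono hφ hk1 ⟨hkx, hkx'.le⟩
    have hMk1 : (1 : ℝ) ≤ M k := by exact_mod_cast le_trans hk1 (hMge k)
    have hφpos : 0 < φ x := lt_of_lt_of_le (by linarith) hlb
    have hMk2 : (M k : ℝ) < M (k+1) := by exact_mod_cast hMmono (Nat.lt_succ_self k)
    have hM1pos : (0 : ℝ) < M (k+1) := by linarith
    have hmk : (m (k+1) : ℝ) = (M (k+1) : ℝ) - M k := by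
      have h := hm (k+1) (by omega)
      simp only [Nat.add_sub_cancel] at h
      rw [h, Nat.cast_sub (hMmono (Nat.lt_succ_self k)).le]
    have hratio : (m (k+1) : ℝ) / (M (k+1) : ℝ) < ε := hK (k+1) (by omega)
    have hle1 : (N x : ℝ) / φ x ≤ 1 := by
      rw [hNx]
      exact div_le_one_of_le₀ hlb hφpos.le
    have hge : 1 - ε < (N x : ℝ) / φ x := by
      rw [hNx]
      have hstep : (M k : ℝ) / (M (k+1) : ℝ) ≤ (M k : ℝ) / φ x :=
        div_le_div_of_nonneg_left (by linarith) hφpos hub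
      have heq : (M k : ℝ) / (M (k+1) : ℝ) = 1 - (m (k+1) : ℝ) / (M (k+1) : ℝ) := by
        rw [hmk]
        field_simp
        ring
      rw [heq] at hstep
      linarith
    rw [Real.dist_eq, abs_lt]
    constructor <;> linarith
  · -- derivative bound
    have hMge : ∀ k, k ≤ M k := fun k => hMmono.le_apply
    intro ε hε
    set δ := liminf (fun k : ℕ => lam (k + 1) - lam k) atTop with hδdef
    have hδ : 0 < δ := hgap
    have hbdd : IsBoundedUnder (· ≥ ·) atTop (fun k : ℕ => lam (k+1) - lam k) :=
      isBoundedUnder_of ⟨0, fun k => (aux_gap hlammono k).le⟩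
    have hev1 : ∀ᶠ k in atTop, δ / 2 < lam (k+1) - lam k :=
      eventually_lt_of_lt_liminf (by linarith) hbdd
    have hev2 : ∀ᶠ j in atTop, (m j : ℝ) / (M j : ℝ) < min (1/2) (ε * (δ/2) / 2) := by
      have hpos : 0 < min (1/2 : ℝ) (ε * (δ/2) / 2) := by
        apply lt_min (by norm_num)
        positivity
      filter_upwards [Metric.tendsto_nhds.mp hrel _ hpos] with j hj
      rw [Real.dist_eq, sub_zero] at hj
      exact lt_of_abs_lt hj
    obtain ⟨K0, hK0⟩ := eventually_atTop.1 (hev1.and hev2)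
    refine ⟨lam (K0 + 1), ?_⟩
    have hcnt : volume (Set.range lam) = 0 := (Set.countable_range lam).measure_zero _
    have hae : ∀ᵐ x ∂(volume : Measure ℝ), x ∉ Set.range lam :=
      measure_eq_zero_iff_ae_notMem.mp hcnt
    filter_upwards [hae] with x hx hRx
    have hx1 : lam 1 ≤ x := le_trans (hlammono.monotone (by omega)) hRx
    obtain ⟨k, hk1, hkx, hkx'⟩ := aux_seg hlammono hlamtop hx1
    have hkK : K0 + 1 ≤ k := by
      by_contra h
      push_neg at h
      have : lam (k+1) ≤ lam (K0+1) := hlammono.monotone (by omega)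
      linarith
    have hlt : lam k < x := lt_of_le_of_ne hkx (by intro h; exact hx ⟨k, h⟩)
    have hmemnhds : Set.Ioo (lam k) (lam (k+1)) ∈ nhds x := isOpen_Ioo.mem_nhds ⟨hlt, hkx'⟩
    have heq : φ =ᶠ[nhds x] fun y => (M k : ℝ) + (y - lam k) * auxSlope lam M k :=
      Filter.eventually_of_mem hmemnhds fun y hy =>
        aux_phi_seg hlammono hφ hk1 ⟨hy.1.le, hy.2.le⟩
    have hda : HasDerivAt (fun y => (M k : ℝ) + (y - lam k) * auxSlope lam M k)
        (auxSlope lam M k) x := by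
      simpa using (((hasDerivAt_id x).sub_const (lam k)).mul_const (auxSlope lam M k)).const_add
        ((M k : ℝ))
    have hderiv : deriv φ x = auxSlope lam M k := by
      rw [heq.deriv_eq]
      exact hda.deriv
    have hgapk : δ / 2 < lam (k+1) - lam k := (hK0 k (by omega)).1
    have hrk : (m (k+1) : ℝ) / (M (k+1) : ℝ) < min (1/2) (ε * (δ/2) / 2) :=
      (hK0 (k+1) (by omega)).2
    have hmk : (m (k+1) : ℝ) = (M (k+1) : ℝ) - M k := by
      have h := hm (k+1) (by omega)
      simp only [Nat.add_sub_cancel] at h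
      rw [h, Nat.cast_sub (hMmono (Nat.lt_succ_self k)).le]
    have hMk1 : (1 : ℝ) ≤ M k := by exact_mod_cast le_trans hk1 (hMge k)
    have hMk2 : (M k : ℝ) < M (k+1) := by exact_mod_cast hMmono (Nat.lt_succ_self k)
    have hM1pos : (0 : ℝ) < M (k+1) := by linarith
    have hlb : (M k : ℝ) ≤ φ x := aux_phi_lb hlammono hMmono hφ hk1 ⟨hkx, hkx'.le⟩
    -- numeric bounds
    have hr1 : (m (k+1) : ℝ) < (M (k+1) : ℝ) / 2 := by
      have := lt_of_lt_of_le hrk (min_le_left _ _)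
      rw [div_lt_iff₀ hM1pos] at this
      linarith
    have hr2 : (m (k+1) : ℝ) < ε * (δ/2) / 2 * (M (k+1) : ℝ) := by
      have := lt_of_lt_of_le hrk (min_le_right _ _)
      rw [div_lt_iff₀ hM1pos] at this
      linarith
    have hMhalf : (M (k+1) : ℝ) / 2 ≤ (M k : ℝ) := by
      rw [hmk] at hr1
      linarith
    have hslope : auxSlope lam M k ≤ ε * (M k : ℝ) := by
      rw [auxSlope, ← hmk]
      rw [div_le_iff₀ (aux_gap hlammono k)]
      have hm0 : (0 : ℝ) ≤ (m (k+1) : ℝ) := Nat.cast_nonneg _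
      have hA : ε * (δ/2) / 2 * (M (k+1) : ℝ) ≤ ε * (δ/2) / 2 * (2 * (M k : ℝ)) := by
        apply mul_le_mul_of_nonneg_left (by linarith) (by positivity)
      have hB : ε * (δ/2) * (M k : ℝ) ≤ ε * (lam (k+1) - lam k) * (M k : ℝ) := by
        apply mul_le_mul_of_nonneg_right _ (by linarith)
        apply mul_le_mul_of_nonneg_left (by linarith) hε.le
      nlinarith
    rw [hderiv]
    have : ε * (M k : ℝ) ≤ ε * φ x := by nlinarith
    linarith
end

section
/- Let μ_n = 1/π(p_n) where p_n is the n-th prime and π the prime counting function (so μ_n = 1/n). Then Σ_{p prime} (Log p / p)^s converges for every real s > 1 and (s-1) · Σ_{p prime} (Log p / p)^s → 1 as s → 1⁺. -/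
open Filter Complex ArithmeticFunction ArithmeticFunction.vonMangoldt

lemma residueClass_one : residueClass (0 : ZMod 1) = fun n => ArithmeticFunction.vonMangoldt n := by
  funext n
  simp only [residueClass]
  rw [Set.indicator_of_mem]
  exact Subsingleton.elim _ _

example : IsUnit (0 : ZMod 1) := isUnit_of_subsingleton 0

-- real identity: for x > 1, ∑' n, Λ n / n^x = (Aux).re + 1/(x-1)
lemma vonMangoldt_tsum_eq {x : ℝ} (hx : 1 < x) :
    ∑' n : ℕ, ArithmeticFunction.vonMangoldt n / (n : ℝ) ^ x =
      (LFunctionResidueClassAux (0 : ZMod 1) x).re + 1 / (x - 1) := by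
  have ha : IsUnit (0 : ZMod 1) := isUnit_of_subsingleton 0
  have H : ∑' n, residueClass (0 : ZMod 1) n / (n : ℝ) ^ x =
      (LFunctionResidueClassAux (0 : ZMod 1) x).re + (Nat.totient 1 : ℝ)⁻¹ / (x - 1) := by
    refine ofReal_injective ?_
    simp only [ofReal_tsum, ofReal_div, ofReal_cpow (Nat.cast_nonneg _), ofReal_natCast,
      ofReal_add, ofReal_inv, ofReal_sub, ofReal_one]
    simp_rw [← LFunctionResidueClassAux_real ha hx,
      eqOn_LFunctionResidueClassAux ha <| Set.mem_setOf.mpr (ofReal_re x ▸ hx), sub_add_cancel,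
      LSeries, LSeries.term]
    refine tsum_congr fun n ↦ ?_
    split_ifs with hn
    · simp only [hn, residueClass_apply_zero, ofReal_zero, zero_div]
    · rfl
  rw [residueClass_one] at H
  simpa using H

lemma aux_re_tendsto :
    Tendsto (fun x : ℝ => (LFunctionResidueClassAux (0 : ZMod 1) x).re) (nhdsWithin 1 (Set.Ioi 1))
      (nhds ((LFunctionResidueClassAux (0 : ZMod 1) 1).re)) := by
  have h1 : ContinuousWithinAt (LFunctionResidueClassAux (0 : ZMod 1)) {s : ℂ | 1 ≤ s.re} 1 :=
    (continuousOn_LFunctionResidueClassAux (0 : ZMod 1)) 1 (by simp)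
  have h2 : Tendsto (fun x : ℝ => (x : ℂ)) (nhdsWithin 1 (Set.Ioi 1))
      (nhdsWithin 1 {s : ℂ | 1 ≤ s.re}) := by
    rw [show ((1 : ℂ) = ((1 : ℝ) : ℂ)) by norm_num]
    exact Complex.continuous_ofReal.continuousWithinAt.tendsto_nhdsWithin
      (fun x hx => by simpa using (le_of_lt hx))
  exact (Complex.continuous_re.continuousAt.tendsto.comp (h1.tendsto.comp h2))

lemma part1 :
    Tendsto (fun x : ℝ => (x - 1) * ∑' n : ℕ, ArithmeticFunction.vonMangoldt n / (n : ℝ) ^ x)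
      (nhdsWithin 1 (Set.Ioi 1)) (nhds 1) := by
  have key : Tendsto (fun x : ℝ =>
      (x - 1) * (LFunctionResidueClassAux (0 : ZMod 1) x).re + 1) (nhdsWithin 1 (Set.Ioi 1))
      (nhds 1) := by
    have h0 : Tendsto (fun x : ℝ => x - 1) (nhdsWithin 1 (Set.Ioi 1)) (nhds 0) := by
      have : Tendsto (fun x : ℝ => x - 1) (nhds 1) (nhds 0) := by
        have h := Continuous.tendsto (f := fun x : ℝ => x - 1) (by continuity) 1
        simpa using h
      exact this.mono_left nhdsWithin_le_nhds
    have := (h0.mul aux_re_tendsto).add (tendsto_const_nhds (x := (1:ℝ)))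
    simpa using this
  refine key.congr' ?_
  filter_upwards [self_mem_nhdsWithin] with x hx
  rw [vonMangoldt_tsum_eq hx, mul_add, mul_one_div,
    div_self (by linarith [Set.mem_Ioi.mp hx] : x - 1 ≠ 0)]

lemma summable_Lam {x : ℝ} (hx : 1 < x) :
    Summable (fun n : ℕ => ArithmeticFunction.vonMangoldt n / (n : ℝ) ^ x) := by
  have hε : (0 : ℝ) < (x - 1) / 2 := by linarith
  refine Summable.of_nonneg_of_le
    (fun n => div_nonneg ArithmeticFunction.vonMangoldt_nonneg (Real.rpow_nonneg (Nat.cast_nonneg n) x))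
    (fun n => ?_)
    ((Real.summable_nat_rpow.mpr (by linarith : -((x+1)/2) < -1)).mul_left (2 / (x - 1)))
  rcases Nat.eq_zero_or_pos n with rfl | hn
  · simp [Real.zero_rpow (by linarith : -((x+1)/2) ≠ 0), Real.zero_rpow (by linarith : x ≠ 0)]
  have hn0 : (0 : ℝ) < n := by exact_mod_cast hn
  have hlog : Real.log n ≤ (2 / (x - 1)) * (n : ℝ) ^ ((x - 1) / 2) := by
    have h := Real.log_le_rpow_div (Nat.cast_nonneg n) hε
    calc Real.log n ≤ (n : ℝ) ^ ((x-1)/2) / ((x-1)/2) := h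
      _ = (2 / (x - 1)) * (n : ℝ) ^ ((x - 1) / 2) := by
          field_simp
  have h1 : ArithmeticFunction.vonMangoldt n / (n : ℝ) ^ x ≤
      ((2 / (x - 1)) * (n : ℝ) ^ ((x - 1) / 2)) / (n : ℝ) ^ x := by
    gcongr
    exact (ArithmeticFunction.vonMangoldt_le_log).trans hlog
  refine h1.trans (le_of_eq ?_)
  rw [mul_div_assoc, ← Real.rpow_sub hn0]
  congr 1
  ring_nf

lemma summable_primes {x : ℝ} (hx : 1 < x) :
    Summable (fun p : {p : ℕ // p.Prime} => Real.log p / (p : ℝ) ^ x) := by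
  have h := (summable_Lam hx).subtype {n : ℕ | n.Prime}
  refine h.congr fun p => ?_
  simp only [Function.comp_apply]
  rw [ArithmeticFunction.vonMangoldt_apply_prime p.prop]

lemma key_ineq {δ x : ℝ} (hδ0 : 0 < δ) (hx : 1 ≤ x) {p : ℕ} (hp : p.Prime) :
    (Real.log p / p) ^ x ≤
      Real.exp ((x - 1) * (-1 - Real.log δ)) *
        (Real.log p / (p : ℝ) ^ (1 + (x - 1) * (1 - δ))) := by
  have hp2 : (2 : ℝ) ≤ p := by exact_mod_cast hp.two_le
  have hp0 : (0 : ℝ) < p := by linarith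
  have ht : 0 < Real.log p := Real.log_pos (by linarith)
  have hlt : Real.log (Real.log p) ≤ δ * Real.log p + (-1 - Real.log δ) := by
    have h1 : Real.log (δ * Real.log p) ≤ δ * Real.log p - 1 :=
      Real.log_le_sub_one_of_pos (by positivity)
    rw [Real.log_mul (ne_of_gt hδ0) (ne_of_gt ht)] at h1
    linarith
  have hxm1 : 0 ≤ x - 1 := by linarith
  -- (log p)^x = log p * exp ((x-1) * log (log p))
  have e1 : (Real.log p / p) ^ x = Real.log p ^ x / (p : ℝ) ^ x :=
    Real.div_rpow ht.le hp0.le x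
  have e2 : Real.log p ^ x = Real.log p * Real.exp ((x - 1) * Real.log (Real.log p)) := by
    rw [show x = 1 + (x - 1) by ring, Real.rpow_add ht, Real.rpow_one,
      Real.rpow_def_of_pos ht, mul_comm (Real.log (Real.log p))]
    ring_nf
  have e3 : Real.exp ((x - 1) * Real.log (Real.log p)) ≤
      Real.exp ((x - 1) * (-1 - Real.log δ)) * (p : ℝ) ^ ((x - 1) * δ) := by
    calc Real.exp ((x - 1) * Real.log (Real.log p))
        ≤ Real.exp ((x - 1) * (δ * Real.log p + (-1 - Real.log δ))) := by
          exact Real.exp_le_exp.mpr (mul_le_mul_of_nonneg_left hlt hxm1)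
      _ = Real.exp ((x - 1) * (-1 - Real.log δ)) * (p : ℝ) ^ ((x - 1) * δ) := by
          rw [Real.rpow_def_of_pos hp0, ← Real.exp_add]
          ring_nf
  calc (Real.log p / p) ^ x = Real.log p * Real.exp ((x - 1) * Real.log (Real.log p)) / (p:ℝ)^x := by
        rw [e1, e2]
    _ ≤ Real.log p * (Real.exp ((x - 1) * (-1 - Real.log δ)) * (p : ℝ) ^ ((x - 1) * δ)) / (p:ℝ)^x := by
        gcongr
    _ = Real.exp ((x - 1) * (-1 - Real.log δ)) *
        (Real.log p / (p : ℝ) ^ (1 + (x - 1) * (1 - δ))) := by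
        rw [show (1 : ℝ) + (x - 1) * (1 - δ) = x - (x - 1) * δ by ring,
          Real.rpow_sub hp0]
        have hpx : (p : ℝ) ^ x ≠ 0 := ne_of_gt (Real.rpow_pos_of_pos hp0 x)
        have hpθ : (p : ℝ) ^ ((x-1)*δ) ≠ 0 := ne_of_gt (Real.rpow_pos_of_pos hp0 _)
        field_simp

lemma G_nonneg (x : ℝ) (p : {p : ℕ // p.Prime}) : 0 ≤ (Real.log p / (p : ℝ)) ^ x :=
  Real.rpow_nonneg (div_nonneg (Real.log_nonneg (by exact_mod_cast p.prop.one_lt.le))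
    (Nat.cast_nonneg _)) x

lemma summable_G {x : ℝ} (hx : 1 < x) :
    Summable (fun p : {p : ℕ // p.Prime} => (Real.log p / (p : ℝ)) ^ x) := by
  have hσ1 : 1 < 1 + (x - 1) * (1 - (1/2 : ℝ)) := by nlinarith
  refine Summable.of_nonneg_of_le (G_nonneg x) (fun p => ?_)
    (((summable_primes hσ1).mul_left (Real.exp ((x - 1) * (-1 - Real.log (1/2 : ℝ))))))
  exact key_ineq (by norm_num) hx.le p.prop

lemma G_le_F {x δ : ℝ} (hδ0 : 0 < δ) (hδ1 : δ < 1) (hx : 1 < x) :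
    (∑' p : {p : ℕ // p.Prime}, (Real.log p / (p : ℝ)) ^ x) ≤
      Real.exp ((x - 1) * (-1 - Real.log δ)) *
        ∑' p : {p : ℕ // p.Prime}, Real.log p / (p : ℝ) ^ (1 + (x - 1) * (1 - δ)) := by
  have hσ1 : 1 < 1 + (x - 1) * (1 - δ) := by nlinarith
  rw [← tsum_mul_left]
  exact Summable.tsum_le_tsum (fun p => key_ineq hδ0 hx.le p.prop) (summable_G hx)
    ((summable_primes hσ1).mul_left _)

lemma F_le_G {x : ℝ} (hx : 1 < x) :
    (∑' p : {p : ℕ // p.Prime}, Real.log p / (p : ℝ) ^ x) - 1 ≤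
      ∑' p : {p : ℕ // p.Prime}, (Real.log p / (p : ℝ)) ^ x := by
  have hlog3 : ∀ p : {p : ℕ // p.Prime}, 3 ≤ (p : ℕ) →
      Real.log p / (p : ℝ) ^ x ≤ (Real.log p / (p : ℝ)) ^ x := by
    intro p hp3
    have hp0 : (0 : ℝ) < (p : ℕ) := by positivity
    have h3 : (3 : ℝ) ≤ (p : ℕ) := by exact_mod_cast hp3
    have hl1 : 1 ≤ Real.log p := by
      rw [show (1 : ℝ) = Real.log (Real.exp 1) by simp]
      exact Real.log_le_log (Real.exp_pos 1) (le_trans (by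
        have := Real.exp_one_lt_d9; linarith) h3)
    rw [Real.div_rpow (by linarith) hp0.le]
    gcongr
    calc Real.log p = Real.log p ^ (1:ℝ) := (Real.rpow_one _).symm
      _ ≤ Real.log p ^ x := Real.rpow_le_rpow_of_exponent_le hl1 hx.le
  have hF := summable_primes hx
  have hG := summable_G hx
  set two : {p : ℕ // p.Prime} := ⟨2, Nat.prime_two⟩ with htwo
  have hFsplit := Summable.tsum_eq_add_tsum_ite hF two
  have hGsplit := Summable.tsum_eq_add_tsum_ite hG two
  have hFtwo : Real.log two / ((two : ℕ) : ℝ) ^ x ≤ 1 := by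
    have h2x : (1 : ℝ) ≤ ((2 : ℕ) : ℝ) ^ x := by
      rw [show (((2:ℕ)) : ℝ) = (2:ℝ) by norm_num]
      exact Real.one_le_rpow (by norm_num) (by linarith)
    have hlog2 : Real.log ((2:ℕ) : ℝ) ≤ 1 := by
      rw [show (((2:ℕ)) : ℝ) = (2:ℝ) by norm_num]
      linarith [Real.log_two_lt_d9]
    calc Real.log two / ((two : ℕ) : ℝ) ^ x ≤ 1 / 1 :=
          div_le_div₀ (by norm_num) hlog2 (by norm_num) h2x
      _ = 1 := by norm_num
  have hFnonneg : ∀ p : {p : ℕ // p.Prime}, 0 ≤ Real.log p / (p : ℝ) ^ x := fun p =>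
    div_nonneg (Real.log_nonneg (by exact_mod_cast p.prop.one_lt.le))
      (Real.rpow_nonneg (Nat.cast_nonneg _) x)
  have hiteF : Summable (fun p : {p : ℕ // p.Prime} =>
      if p = two then 0 else Real.log p / (p : ℝ) ^ x) := by
    refine hF.of_nonneg_of_le (fun p => ?_) (fun p => ?_) <;> split_ifs
    exacts [le_rfl, hFnonneg _, hFnonneg _, le_rfl]
  have hiteG : Summable (fun p : {p : ℕ // p.Prime} =>
      if p = two then 0 else (Real.log p / (p : ℝ)) ^ x) := by
    refine hG.of_nonneg_of_le (fun p => ?_) (fun p => ?_) <;> split_ifs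
    exacts [le_rfl, G_nonneg x _, G_nonneg x _, le_rfl]
  have hle : (∑' p : {p : ℕ // p.Prime}, if p = two then 0 else Real.log p / (p : ℝ) ^ x) ≤
      ∑' p : {p : ℕ // p.Prime}, if p = two then 0 else (Real.log p / (p : ℝ)) ^ x := by
    refine Summable.tsum_le_tsum (fun p => ?_) hiteF hiteG
    split_ifs with h
    · exact le_rfl
    · refine hlog3 p ?_
      have h2 := p.prop.two_le
      rcases lt_or_eq_of_le h2 with h' | h'
      · omega
      · exact absurd (Subtype.ext h'.symm) h
  have hGtwo : 0 ≤ (Real.log two / ((two : ℕ) : ℝ)) ^ x := G_nonneg x two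
  rw [hFsplit, hGsplit]
  push_cast at hFtwo ⊢
  linarith

lemma summable_piece1 {x : ℝ} (hx : 1 < x) :
    Summable (fun n : ℕ => (if n.Prime then ArithmeticFunction.vonMangoldt n else 0) / (n : ℝ) ^ x) := by
  refine (summable_Lam hx).of_nonneg_of_le (fun n => ?_) (fun n => ?_)
  · split_ifs
    · exact div_nonneg ArithmeticFunction.vonMangoldt_nonneg (Real.rpow_nonneg (Nat.cast_nonneg _) x)
    · simp
  · gcongr
    split_ifs
    exacts [le_rfl, ArithmeticFunction.vonMangoldt_nonneg]

lemma summable_piece2 {x : ℝ} (hx : 1 < x) :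
    Summable (fun n : ℕ => (if n.Prime then 0 else ArithmeticFunction.vonMangoldt n) / (n : ℝ) ^ x) := by
  refine (summable_Lam hx).of_nonneg_of_le (fun n => ?_) (fun n => ?_)
  · split_ifs
    · simp
    · exact div_nonneg ArithmeticFunction.vonMangoldt_nonneg (Real.rpow_nonneg (Nat.cast_nonneg _) x)
  · gcongr
    split_ifs
    exacts [ArithmeticFunction.vonMangoldt_nonneg, le_rfl]

lemma split_A {x : ℝ} (hx : 1 < x) :
    ∑' n : ℕ, ArithmeticFunction.vonMangoldt n / (n : ℝ) ^ x =
      (∑' p : {p : ℕ // p.Prime}, Real.log p / (p : ℝ) ^ x) +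
      ∑' n : ℕ, (if n.Prime then 0 else ArithmeticFunction.vonMangoldt n) / (n : ℝ) ^ x := by
  have h1 : (∑' p : {p : ℕ // p.Prime}, Real.log p / (p : ℝ) ^ x) =
      ∑' n : ℕ, (if n.Prime then ArithmeticFunction.vonMangoldt n else 0) / (n : ℝ) ^ x := by
    rw [← tsum_subtype_eq_of_support_subset (s := {n : ℕ | n.Prime}) ?_]
    · exact tsum_congr fun p => by
        rw [ArithmeticFunction.vonMangoldt_apply_prime p.prop, if_pos p.prop]
    · intro n hn
      simp only [Function.mem_support, ne_eq] at hn
      by_contra hnp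
      exact hn (by rw [if_neg (show ¬ n.Prime from hnp), zero_div])
  rw [h1, ← Summable.tsum_add (summable_piece1 hx) (summable_piece2 hx)]
  refine tsum_congr fun n => ?_
  rw [← add_div]
  congr 1
  split_ifs <;> simp

lemma T_bound {x : ℝ} (hx : 1 < x) :
    ∑' n : ℕ, (if n.Prime then 0 else ArithmeticFunction.vonMangoldt n) / (n : ℝ) ^ x ≤
      ∑' n : ℕ, (if n.Prime then 0 else ArithmeticFunction.vonMangoldt n) / (n : ℝ) := by
  have hsum1 : Summable (fun n : ℕ =>
      (if n.Prime then 0 else ArithmeticFunction.vonMangoldt n) / (n : ℝ)) := by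
    have := summable_residueClass_non_primes_div (0 : ZMod 1)
    rw [residueClass_one] at this
    exact this
  refine Summable.tsum_le_tsum (fun n => ?_) (summable_piece2 hx) hsum1
  rcases Nat.eq_zero_or_pos n with rfl | hn
  · simp
  have hn1 : (1 : ℝ) ≤ n := by exact_mod_cast hn
  have : (n : ℝ) ≤ (n : ℝ) ^ x := by
    calc (n : ℝ) = (n : ℝ) ^ (1:ℝ) := (Real.rpow_one _).symm
      _ ≤ (n : ℝ) ^ x := Real.rpow_le_rpow_of_exponent_le hn1 hx.le
  refine div_le_div_of_nonneg_left ?_ (by exact_mod_cast hn) this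
  split_ifs
  · simp
  · exact ArithmeticFunction.vonMangoldt_nonneg

lemma tendsto_F :
    Tendsto (fun x : ℝ => (x - 1) * ∑' p : {p : ℕ // p.Prime}, Real.log p / (p : ℝ) ^ x)
      (nhdsWithin 1 (Set.Ioi 1)) (nhds 1) := by
  have hT0 : ∀ x : ℝ, 1 < x →
      0 ≤ ∑' n : ℕ, (if n.Prime then 0 else ArithmeticFunction.vonMangoldt n) / (n : ℝ) ^ x := by
    intro x hx
    refine tsum_nonneg fun n => ?_
    split_ifs
    · simp
    · exact div_nonneg ArithmeticFunction.vonMangoldt_nonneg (Real.rpow_nonneg (Nat.cast_nonneg _) x)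
  have hTtend : Tendsto (fun x : ℝ =>
      (x - 1) * ∑' n : ℕ, (if n.Prime then 0 else ArithmeticFunction.vonMangoldt n) / (n : ℝ) ^ x)
      (nhdsWithin 1 (Set.Ioi 1)) (nhds 0) := by
    set C := ∑' n : ℕ, (if n.Prime then 0 else ArithmeticFunction.vonMangoldt n) / (n : ℝ) with hC
    have hhi : Tendsto (fun x : ℝ => (x - 1) * C) (nhdsWithin 1 (Set.Ioi 1)) (nhds 0) := by
      have h := Continuous.tendsto (f := fun x : ℝ => (x - 1) * C) (by continuity) 1
      simp only [sub_self, zero_mul] at h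
      exact h.mono_left nhdsWithin_le_nhds
    refine tendsto_of_tendsto_of_tendsto_of_le_of_le' tendsto_const_nhds hhi ?_ ?_
    · filter_upwards [self_mem_nhdsWithin] with x hx
      exact mul_nonneg (by linarith [Set.mem_Ioi.mp hx]) (hT0 x hx)
    · filter_upwards [self_mem_nhdsWithin] with x hx
      exact mul_le_mul_of_nonneg_left (T_bound hx) (by linarith [Set.mem_Ioi.mp hx])
  have h := part1.sub hTtend
  rw [sub_zero] at h
  refine h.congr' ?_
  filter_upwards [self_mem_nhdsWithin] with x hx
  rw [split_A hx]
  ring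

lemma tendsto_G :
    Tendsto (fun x : ℝ =>
        (x - 1) * ∑' p : {p : ℕ // p.Prime}, (Real.log p / (p : ℝ)) ^ x)
      (nhdsWithin 1 (Set.Ioi 1)) (nhds 1) := by
  rw [show (nhds (1:ℝ)) = nhds 1 from rfl]
  refine tendsto_order.2 ⟨fun b hb => ?_, fun b hb => ?_⟩
  · -- lower bound
    have hlow : Tendsto (fun x : ℝ =>
        (x - 1) * (∑' p : {p : ℕ // p.Prime}, Real.log p / (p : ℝ) ^ x) - (x - 1))
        (nhdsWithin 1 (Set.Ioi 1)) (nhds 1) := by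
      have h0 : Tendsto (fun x : ℝ => x - 1) (nhdsWithin 1 (Set.Ioi 1)) (nhds 0) := by
        have h := Continuous.tendsto (f := fun x : ℝ => x - 1) (by continuity) 1
        simp only [sub_self] at h
        exact h.mono_left nhdsWithin_le_nhds
      have := tendsto_F.sub h0
      simpa using this
    filter_upwards [hlow.eventually (eventually_gt_nhds hb), self_mem_nhdsWithin] with x hx1 hx2
    have hx : 1 < x := Set.mem_Ioi.mp hx2
    have hFG := F_le_G hx
    have : (x - 1) * ((∑' p : {p : ℕ // p.Prime}, Real.log p / (p : ℝ) ^ x) - 1) ≤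
        (x - 1) * ∑' p : {p : ℕ // p.Prime}, (Real.log p / (p : ℝ)) ^ x :=
      mul_le_mul_of_nonneg_left hFG (by linarith)
    calc b < (x - 1) * (∑' p : {p : ℕ // p.Prime}, Real.log p / (p : ℝ) ^ x) - (x - 1) := hx1
      _ = (x - 1) * ((∑' p : {p : ℕ // p.Prime}, Real.log p / (p : ℝ) ^ x) - 1) := by ring
      _ ≤ _ := this
  · -- upper bound
    set δ : ℝ := min (1/2) ((b - 1) / (2 * b)) with hδdef
    have hb0 : (0:ℝ) < b := by linarith
    have hδ0 : 0 < δ := lt_min (by norm_num) (div_pos (by linarith) (by linarith))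
    have hδ1 : δ < 1 := lt_of_le_of_lt (min_le_left _ _) (by norm_num)
    have hδb : 1 / (1 - δ) < b := by
      rw [div_lt_iff₀ (by linarith)]
      have hδle : δ ≤ (b - 1) / (2 * b) := min_le_right _ _
      have h2 : δ * b ≤ (b - 1) / 2 := by
        calc δ * b ≤ ((b - 1) / (2 * b)) * b := mul_le_mul_of_nonneg_right hδle hb0.le
          _ = (b - 1) / 2 := by field_simp
      nlinarith
    have hσtend : Tendsto (fun x : ℝ => 1 + (x - 1) * (1 - δ)) (nhdsWithin 1 (Set.Ioi 1))
        (nhdsWithin 1 (Set.Ioi 1)) := by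
      refine tendsto_nhdsWithin_of_tendsto_nhds_of_eventually_within _ ?_ ?_
      · have h := Continuous.tendsto (f := fun x : ℝ => 1 + (x - 1) * (1 - δ)) (by continuity) 1
        simpa using h.mono_left nhdsWithin_le_nhds
      · filter_upwards [self_mem_nhdsWithin] with x hx
        have : 1 < x := Set.mem_Ioi.mp hx
        have : 0 < (x - 1) * (1 - δ) := by nlinarith
        simpa using by linarith
    have hcomp : Tendsto (fun x : ℝ => ((1 + (x - 1) * (1 - δ)) - 1) *
        ∑' p : {p : ℕ // p.Prime}, Real.log p / (p : ℝ) ^ (1 + (x - 1) * (1 - δ)))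
        (nhdsWithin 1 (Set.Ioi 1)) (nhds 1) := tendsto_F.comp hσtend
    have hE : Tendsto (fun x : ℝ => Real.exp ((x - 1) * (-1 - Real.log δ)))
        (nhdsWithin 1 (Set.Ioi 1)) (nhds 1) := by
      have h := Continuous.tendsto (f := fun x : ℝ => Real.exp ((x - 1) * (-1 - Real.log δ)))
        (by continuity) 1
      simpa using h.mono_left nhdsWithin_le_nhds
    have hU : Tendsto (fun x : ℝ => Real.exp ((x - 1) * (-1 - Real.log δ)) * ((1 / (1 - δ)) *
        (((1 + (x - 1) * (1 - δ)) - 1) *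
        ∑' p : {p : ℕ // p.Prime}, Real.log p / (p : ℝ) ^ (1 + (x - 1) * (1 - δ)))))
        (nhdsWithin 1 (Set.Ioi 1)) (nhds (1 / (1 - δ))) := by
      have := hE.mul ((tendsto_const_nhds (x := 1 / (1 - δ))).mul hcomp)
      simpa using this
    filter_upwards [hU.eventually (eventually_lt_nhds hδb), self_mem_nhdsWithin] with x hx1 hx2
    have hx : 1 < x := Set.mem_Ioi.mp hx2
    refine lt_of_le_of_lt ?_ hx1
    have hle := G_le_F hδ0 hδ1 hx
    calc (x - 1) * ∑' p : {p : ℕ // p.Prime}, (Real.log p / (p : ℝ)) ^ x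
        ≤ (x - 1) * (Real.exp ((x - 1) * (-1 - Real.log δ)) *
            ∑' p : {p : ℕ // p.Prime}, Real.log p / (p : ℝ) ^ (1 + (x - 1) * (1 - δ))) :=
          mul_le_mul_of_nonneg_left hle (by linarith)
      _ = Real.exp ((x - 1) * (-1 - Real.log δ)) * ((1 / (1 - δ)) *
            (((1 + (x - 1) * (1 - δ)) - 1) *
            ∑' p : {p : ℕ // p.Prime}, Real.log p / (p : ℝ) ^ (1 + (x - 1) * (1 - δ)))) := by
          have h1δ : (1 : ℝ) - δ ≠ 0 := by linarith
          field_simp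
          ring

theorem stmt_16 :
    (∀ s : ℝ, 1 < s →
      Summable (fun p : {p : ℕ // p.Prime} => (Real.log p / (p : ℝ)) ^ s)) ∧
    Tendsto (fun s : ℝ =>
        (s - 1) * ∑' p : {p : ℕ // p.Prime}, (Real.log p / (p : ℝ)) ^ s)
      (nhdsWithin 1 (Set.Ioi 1)) (nhds 1) :=
  ⟨fun _ hs => summable_G hs, tendsto_G⟩
end
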